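/- arXiv:1409.1833 — 6 statements merged into one kernel-verified Lean document; each statement's English description precedes it below -/
import Mathlib

section
/- Let (p,q) be a non-strict pair in X. Then bisec(p,q) = B₁ ∪ B₂ ∪ B₃, where B₂ = C(p,φ) ∩ C(q,φ), B₃ = C(p,−φ) ∩ C(q,−φ), and B₁ is a set for which there exists a homeomorphism f : [0,1] → B₁ with f(0) = s_b and f(1) = s_t. -/
variable {X : Type*} [NormedAddCommGroup X] [NormedSpace ℝ X]

/-- The bisector of two points: all points equidistant from `p` and `q`. -/
def bisec (p q : X) : Set X := {z : X | ‖z - p‖ = ‖z - q‖}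

/-- The pair `(p, q)` is strict if the unit sphere contains no nondegenerate
segment parallel to `p - q`. -/
def strictPair (p q : X) : Prop :=
  ¬ ∃ a b : X, a ≠ b ∧ segment ℝ a b ⊆ {x : X | ‖x‖ = 1} ∧ ∃ t : ℝ, b - a = t • (p - q)

/-- The cone `C(x, φ) = {x + a : φ(a) = ‖a‖}`. -/
def cone (x : X) (φ : X →L[ℝ] ℝ) : Set X := {z : X | φ (z - x) = ‖z - x‖}

/-!
Write `q - p = r • (u' - u)` with `r > 0`. On every line `p + a + ℝ • (q - p)` the function
`T ↦ ‖a + T • (q - p)‖ - ‖a + (T - 1) • (q - p)‖` changes sign, so every level set of `φ` meets the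
bisector. Two distinct bisector points on one level differ by a multiple of `q - p`, and a
functional norming `z - p` then vanishes on `q - p`; in the plane such a functional is `±φ`, so
both points lie in `C(p, φ) ∩ C(q, φ)` or in `C(p, -φ) ∩ C(q, -φ)`. The vectors `a` with
`φ a = ‖a‖ = ρ` form the segment `ρ • [u, u']`; for `z ∈ C(p, φ) ∩ C(q, φ)` both `z - q` and
`z - p = z - q + r • (u' - u)` are such vectors, which forces `ρ = φ (z - q) ≥ r`, with equality
only at `z = s_t`. Hence the cones live on the levels `≥ φ p + r` and `≤ φ p - r`, and `φ` is a
continuous bijection from the compact middle piece `B₁` of the bisector onto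
`[φ p - r, φ p + r]`.
-/

open Set

theorem Set.BijOn.exists_homeomorph {α β : Type*} [TopologicalSpace α] [TopologicalSpace β]
    [T2Space β] {s : Set α} {t : Set β} {g : α → β} (h : BijOn g s t) (hs : IsCompact s)
    (hg : ContinuousOn g s) : ∃ e : t ≃ₜ s, ∀ y, g (e y) = y := by
  have := isCompact_iff_compactSpace.mp hs
  let e := (hg.mapsToRestrict h.mapsTo).homeoOfEquivCompactToT2 (f := h.equiv g)
  exact ⟨e.symm, fun y => congrArg Subtype.val (e.apply_symm_apply y)⟩

theorem norm_add_smul_sub_one_lt {a d : X} {T : ℝ} (hT : 1 ≤ T) (h : 2 * ‖a‖ < T * ‖d‖) :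
    ‖a + (T - 1) • d‖ < ‖a + T • d‖ := by
  have hsplit : T • (a + (T - 1) • d) = (T - 1) • (a + T • d) + a := by module
  have hconv : T * ‖a + (T - 1) • d‖ ≤ (T - 1) * ‖a + T • d‖ + ‖a‖ := by
    rw [← norm_smul_of_nonneg (by linarith) (a + (T - 1) • d), hsplit,
      ← norm_smul_of_nonneg (by linarith : 0 ≤ T - 1) (a + T • d)]
    exact norm_add_le _ _
  have hfar : T * ‖d‖ ≤ ‖a + T • d‖ + ‖a‖ := by
    simpa [norm_smul_of_nonneg (by linarith : 0 ≤ T)] using norm_sub_le (a + T • d) a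
  nlinarith

theorem norm_add_smul_lt_of_nonpos {a d : X} {T : ℝ} (hT : T ≤ 0) (h : 2 * ‖a‖ < (1 - T) * ‖d‖) :
    ‖a + T • d‖ < ‖a + (T - 1) • d‖ := by
  have := norm_add_smul_sub_one_lt (a := a) (d := -d) (by linarith : 1 ≤ 1 - T) (by rwa [norm_neg])
  rwa [show a + (1 - T - 1) • -d = a + T • d by module,
    show a + (1 - T) • -d = a + (T - 1) • d by module] at this

theorem exists_norm_add_smul_eq (a : X) {d : X} (hd : d ≠ 0) :
    ∃ T : ℝ, ‖a + T • d‖ = ‖a + (T - 1) • d‖ := by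
  set g : ℝ → ℝ := fun T => ‖a + T • d‖ - ‖a + (T - 1) • d‖
  set M := 2 * ‖a‖ / ‖d‖
  have hM : 0 ≤ M := by positivity
  have hMd : M * ‖d‖ = 2 * ‖a‖ := div_mul_cancel₀ _ (norm_ne_zero_iff.mpr hd)
  have hd' : 0 < ‖d‖ := norm_pos_iff.mpr hd
  have hlow : g (-M) ≤ 0 :=
    (sub_neg.mpr (norm_add_smul_lt_of_nonpos (by linarith) (by nlinarith))).le
  have hhigh : 0 ≤ g (M + 1) :=
    (sub_pos.mpr (norm_add_smul_sub_one_lt (by linarith) (by nlinarith))).le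
  obtain ⟨T, -, hT⟩ := intermediate_value_Icc (by linarith : -M ≤ M + 1)
    (by fun_prop : Continuous g).continuousOn ⟨hlow, hhigh⟩
  exact ⟨T, sub_eq_zero.mp hT⟩

theorem norm_smul_le_of_norm_add_smul_eq {a d : X} {T : ℝ}
    (h : ‖a + T • d‖ = ‖a + (T - 1) • d‖) : ‖T • d‖ ≤ 2 * ‖a‖ + ‖d‖ := by
  rw [norm_smul, Real.norm_eq_abs]
  rcases le_total 1 T with hT | hT
  · rw [abs_of_nonneg (by linarith)]
    by_contra! hlt
    exact (norm_add_smul_sub_one_lt hT (by linarith [norm_nonneg d])).ne h.symm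
  rcases le_total T 0 with hT' | hT'
  · rw [abs_of_nonpos hT']
    by_contra! hlt
    exact (norm_add_smul_lt_of_nonpos hT' (by linarith [norm_nonneg d])).ne h
  · rw [abs_of_nonneg hT']
    nlinarith [norm_nonneg a, norm_nonneg d]

theorem exists_add_add_smul_mem_bisec (a : X) {p q : X} (hpq : p ≠ q) :
    ∃ T : ℝ, p + a + T • (q - p) ∈ bisec p q := by
  obtain ⟨T, hT⟩ := exists_norm_add_smul_eq a (sub_ne_zero.mpr hpq.symm)
  refine ⟨T, ?_⟩
  show ‖_‖ = ‖_‖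
  rwa [show p + a + T • (q - p) - p = a + T • (q - p) by abel,
    show p + a + T • (q - p) - q = a + (T - 1) • (q - p) by module]

theorem norm_sub_le_of_mem_bisec {p q z a : X} {T : ℝ} (hz : z ∈ bisec p q)
    (hza : z - p = a + T • (q - p)) : ‖z - p‖ ≤ 3 * ‖a‖ + ‖q - p‖ := by
  have hzq : z - q = a + (T - 1) • (q - p) := by
    rw [← sub_sub_sub_cancel_right z q p, hza]; module
  have hT := norm_smul_le_of_norm_add_smul_eq (by rw [← hza, ← hzq]; exact hz)
  rw [hza]
  linarith [norm_add_le a (T • (q - p))]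

theorem apply_le_norm_of_opNorm_le {ψ : X →L[ℝ] ℝ} (hψ : ‖ψ‖ ≤ 1) (x : X) : ψ x ≤ ‖x‖ :=
  (le_abs_self _).trans (by simpa using ψ.le_of_opNorm_le hψ x)

theorem norm_add_smul_eq_norm_of_norm_sub_eq {a d : X} {s : ℝ} (hs : 0 < s)
    (h₀ : ‖a - d‖ = ‖a‖) (h₁ : ‖a + (s - 1) • d‖ = ‖a + s • d‖) : ‖a + s • d‖ = ‖a‖ := by
  have i₀ := norm_add_le (s • (a - d)) (a + s • d)
  have i₁ := norm_add_le (a - d) (s • (a + s • d))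
  rw [show s • (a - d) + (a + s • d) = (s + 1) • a by module] at i₀
  rw [show a - d + s • (a + s • d) = (s + 1) • (a + (s - 1) • d) by module] at i₁
  simp only [norm_smul_of_nonneg hs.le, norm_smul_of_nonneg (by linarith : 0 ≤ s + 1), h₀, h₁]
    at i₀ i₁
  linarith

theorem exists_mem_cone_inter_of_mem_bisec [Nontrivial X] {p q z : X} {s : ℝ} (hs : 0 < s)
    (hz : z ∈ bisec p q) (hz' : z + s • (q - p) ∈ bisec p q) :
    ∃ ψ : X →L[ℝ] ℝ, ‖ψ‖ = 1 ∧ ψ (q - p) = 0 ∧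
      z ∈ cone p ψ ∩ cone q ψ ∧ z + s • (q - p) ∈ cone p ψ ∩ cone q ψ := by
  set a := z - p
  set d := q - p
  have hzq : z - q = a - d := (sub_sub_sub_cancel_right z q p).symm
  have hz'p : z + s • d - p = a + s • d := by simp only [a]; abel
  have hz'q : z + s • d - q = a + (s - 1) • d := by simp only [a, d]; module
  change ‖a‖ = ‖z - q‖ at hz
  change ‖z + s • d - p‖ = ‖z + s • d - q‖ at hz'
  rw [hzq] at hz
  rw [hz'p, hz'q] at hz'
  have hnorm := norm_add_smul_eq_norm_of_norm_sub_eq hs hz.symm hz'.symm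
  obtain ⟨ψ, hψ, hψa⟩ := exists_dual_vector' ℝ a
  replace hψa : ψ a = ‖a‖ := mod_cast hψa
  -- `ψ (a - d) ≤ ‖a‖ = ψ a` and `ψ (a + s • d) ≤ ‖a‖ = ψ a` squeeze `ψ d` to `0`.
  have hψd : ψ d = 0 := by
    have h₀ := apply_le_norm_of_opNorm_le hψ.le (a - d)
    have h₁ := apply_le_norm_of_opNorm_le hψ.le (a + s • d)
    rw [map_sub, ← hz] at h₀
    rw [map_add, map_smul, smul_eq_mul, hnorm] at h₁
    nlinarith
  have hline : ∀ t : ℝ, ψ (a + t • d) = ‖a‖ := by simp [hψd, hψa]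
  refine ⟨ψ, hψ, hψd, ⟨hψa, ?_⟩, ?_, ?_⟩
  · show ψ (z - q) = ‖z - q‖
    rw [hzq, ← hz, sub_eq_add_neg, ← neg_one_smul ℝ d, hline]
  · show ψ (z + s • d - p) = ‖z + s • d - p‖
    rw [hz'p, hline, hnorm]
  · show ψ (z + s • d - q) = ‖z + s • d - q‖
    rw [hz'q, hline, ← hz', hnorm]

theorem mem_cone_inter_of_mem_bisec_of_apply_eq [Nontrivial X] {p q : X} {φ : X →L[ℝ] ℝ}
    (hker : ∀ x : X, φ x = 0 → ∃ s : ℝ, x = s • (q - p))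
    (huniq : ∀ ψ : X →L[ℝ] ℝ, ‖ψ‖ = 1 → ψ (q - p) = 0 → ψ = φ ∨ ψ = -φ)
    {z z' : X} (hz : z ∈ bisec p q) (hz' : z' ∈ bisec p q) (hne : z ≠ z') (hφ : φ z = φ z') :
    (z ∈ cone p φ ∩ cone q φ ∧ z' ∈ cone p φ ∩ cone q φ) ∨
      (z ∈ cone p (-φ) ∩ cone q (-φ) ∧ z' ∈ cone p (-φ) ∩ cone q (-φ)) := by
  obtain ⟨s, hs⟩ := hker (z' - z) (by rw [map_sub, hφ, sub_self])
  wlog hs0 : 0 < s generalizing z z' s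
  · have hs0' : 0 < -s := by
      refine neg_pos.mpr (lt_of_le_of_ne (not_lt.mp hs0) fun h => hne ?_)
      rw [h, zero_smul, sub_eq_zero] at hs
      exact hs.symm
    have := this hz' hz hne.symm hφ.symm (-s) (by rw [neg_smul, ← hs, neg_sub]) hs0'
    tauto
  obtain rfl : z' = z + s • (q - p) := by rw [← hs, add_sub_cancel]
  obtain ⟨ψ, hψ, hψd, h, h'⟩ := exists_mem_cone_inter_of_mem_bisec hs0 hz hz'
  rcases huniq ψ hψ hψd with rfl | rfl
  · exact Or.inl ⟨h, h'⟩
  · exact Or.inr ⟨h, h'⟩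

theorem mem_cone_neg_iff {p z : X} {φ : X →L[ℝ] ℝ} : z ∈ cone p (-φ) ↔ φ (p - z) = ‖p - z‖ := by
  change -φ (z - p) = ‖z - p‖ ↔ _
  rw [← map_neg, neg_sub, norm_sub_rev]

theorem cone_inter_subset_bisec {p q : X} {ψ : X →L[ℝ] ℝ} (hψ : ψ (q - p) = 0) :
    cone p ψ ∩ cone q ψ ⊆ bisec p q := by
  rintro z ⟨hp, hq⟩
  change ψ (z - p) = ‖z - p‖ at hp
  change ψ (z - q) = ‖z - q‖ at hq
  change ‖z - p‖ = ‖z - q‖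
  rw [← hp, ← hq, ← sub_eq_zero, ← map_sub, sub_sub_sub_cancel_left, hψ]

section Plane

variable {V : Type*} [AddCommGroup V] [Module ℝ V] {f : V →ₗ[ℝ] ℝ} {u u' : V}

theorem linearIndependent_pair_of_apply_eq_one (hu : f u = 1) (hu' : f u' = 1) (huu' : u ≠ u') :
    LinearIndependent ℝ ![u, u'] := by
  refine LinearIndependent.pair_iff.mpr fun a b hab => ?_
  have hsum : a + b = 0 := by simpa [hu, hu'] using congrArg f hab
  obtain rfl : b = -a := by linarith
  have : a • (u - u') = 0 := by rw [← hab]; module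
  obtain rfl := (smul_eq_zero.mp this).resolve_right (sub_ne_zero.mpr huu')
  exact ⟨rfl, neg_zero⟩

theorem exists_eq_smul_add_smul_of_finrank_eq_two (hdim : Module.finrank ℝ V = 2)
    (hli : LinearIndependent ℝ ![u, u']) (x : V) : ∃ a b : ℝ, x = a • u + b • u' := by
  have hspan := hli.span_eq_top_of_card_eq_finrank (by simp [hdim])
  rw [Matrix.range_cons_cons_empty] at hspan
  obtain ⟨a, b, hab⟩ := Submodule.mem_span_pair.mp (hspan ▸ Submodule.mem_top : x ∈ _)
  exact ⟨a, b, hab.symm⟩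

theorem exists_eq_smul_of_apply_eq_zero (hspan : ∀ x : V, ∃ a b : ℝ, x = a • u + b • u')
    (hu : f u = 1) (hu' : f u' = 1) {v : V} {κ : ℝ} (hdir : u' - u = κ • v) {x : V}
    (hx : f x = 0) : ∃ s : ℝ, x = s • v := by
  obtain ⟨a, b, rfl⟩ := hspan x
  have hsum : a + b = 0 := by simpa [hu, hu'] using hx
  refine ⟨b * κ, ?_⟩
  rw [mul_smul, ← hdir, show a = -b by linarith]
  module

end Plane

theorem eq_or_eq_neg_of_apply_eq_zero {u u' v : X} {φ : X →L[ℝ] ℝ} (hφ : ‖φ‖ = 1)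
    (hspan : ∀ x : X, ∃ a b : ℝ, x = a • u + b • u') (hu : φ u = 1) (hu' : φ u' = 1) {κ : ℝ}
    (hdir : u' - u = κ • v) {ψ : X →L[ℝ] ℝ} (hψ : ‖ψ‖ = 1) (hψv : ψ v = 0) :
    ψ = φ ∨ ψ = -φ := by
  have hψu : ψ u' = ψ u := by
    rw [← sub_eq_zero, ← map_sub, hdir, map_smul, hψv, smul_zero]
  have hψφ : ψ = ψ u • φ := by
    ext x
    obtain ⟨a, b, rfl⟩ := hspan x
    simp only [map_add, map_smul, smul_eq_mul, hu, hu', hψu, smul_apply]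
    ring
  have habs : |ψ u| = 1 := by
    simpa [hψ, hφ, norm_smul] using (congrArg norm hψφ).symm
  rcases abs_eq zero_le_one |>.mp habs with h | h
  · left; rw [hψφ, h, one_smul]
  · right; rw [hψφ, h]; exact neg_one_smul ℝ φ

/-- The piece `B₁` of the decomposition. -/
def bisecSlab (p q : X) (φ : X →L[ℝ] ℝ) (r : ℝ) : Set X :=
  bisec p q ∩ φ ⁻¹' Icc (φ p - r) (φ p + r)

section Face

variable {φ : X →L[ℝ] ℝ} {u u' p q : X} {r : ℝ}

theorem left_mem_face (hface : {x : X | ‖x‖ ≤ 1 ∧ φ x = 1} = segment ℝ u u') :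
    ‖u‖ ≤ 1 ∧ φ u = 1 :=
  (hface ▸ left_mem_segment ℝ u u' : u ∈ {x : X | ‖x‖ ≤ 1 ∧ φ x = 1})

theorem right_mem_face (hface : {x : X | ‖x‖ ≤ 1 ∧ φ x = 1} = segment ℝ u u') :
    ‖u'‖ ≤ 1 ∧ φ u' = 1 :=
  (hface ▸ right_mem_segment ℝ u u' : u' ∈ {x : X | ‖x‖ ≤ 1 ∧ φ x = 1})

theorem apply_sub_eq_zero_of_face (hface : {x : X | ‖x‖ ≤ 1 ∧ φ x = 1} = segment ℝ u u')
    (hqp : q - p = r • (u' - u)) : φ (q - p) = 0 := by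
  rw [hqp, map_smul, map_sub, (left_mem_face hface).2, (right_mem_face hface).2, sub_self,
    smul_zero]

theorem apply_smul_add_smul_eq_norm (hφ : ‖φ‖ ≤ 1)
    (hface : {x : X | ‖x‖ ≤ 1 ∧ φ x = 1} = segment ℝ u u') {a b : ℝ} (ha : 0 ≤ a) (hb : 0 ≤ b) :
    φ (a • u + b • u') = ‖a • u + b • u'‖ := by
  obtain ⟨hu, hφu⟩ := left_mem_face hface
  obtain ⟨hu', hφu'⟩ := right_mem_face hface
  refine le_antisymm (apply_le_norm_of_opNorm_le hφ _) ?_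
  calc ‖a • u + b • u'‖ ≤ a * ‖u‖ + b * ‖u'‖ := by
        simpa only [norm_smul_of_nonneg ha u, norm_smul_of_nonneg hb u'] using
          norm_add_le (a • u) (b • u')
    _ ≤ a + b := by nlinarith
    _ = φ (a • u + b • u') := by simp [hφu, hφu']

/-- After scaling by `‖x‖`, both `x` and `y` lie on the face `[u, u']`. -/
theorem le_norm_of_sub_eq_smul (hface : {x : X | ‖x‖ ≤ 1 ∧ φ x = 1} = segment ℝ u u')
    (huu' : u ≠ u') {x y : X} {k : ℝ} (hk : 0 < k) (hx : φ x = ‖x‖) (hy : φ y = ‖y‖)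
    (hxy : y - x = k • (u' - u)) : k ≤ ‖x‖ ∧ (k = ‖x‖ → x = k • u) := by
  have hdir : u' - u ≠ 0 := sub_ne_zero.mpr huu'.symm
  have hφy : φ y = φ x := by
    simpa [sub_eq_zero] using apply_sub_eq_zero_of_face hface hxy
  have hx0 : x ≠ 0 := by
    rintro rfl
    rw [sub_zero] at hxy
    rw [hφy, map_zero, eq_comm, norm_eq_zero, hxy, smul_eq_zero] at hy
    exact hy.elim hk.ne' hdir
  set ρ := ‖x‖
  have hρ0 : 0 < ρ := norm_pos_iff.mpr hx0
  have hmem : ∀ v : X, φ v = ρ → ‖v‖ = ρ → ρ⁻¹ • v ∈ segment ℝ u u' := by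
    intro v hφv hv
    rw [← hface]
    refine ⟨?_, ?_⟩
    · rw [norm_smul_of_nonneg (inv_nonneg.mpr hρ0.le), hv, inv_mul_cancel₀ hρ0.ne']
    · rw [map_smul, hφv, smul_eq_mul, inv_mul_cancel₀ hρ0.ne']
  rw [segment_eq_image'] at hmem
  obtain ⟨t₁, ⟨ht₁, -⟩, hx₁⟩ := hmem x hx rfl
  obtain ⟨t₂, ⟨-, ht₂⟩, hy₂⟩ := hmem y (hφy.trans hx) (hy.symm.trans (hφy.trans hx))
  dsimp only at hx₁ hy₂
  have hxρ : x = ρ • (u + t₁ • (u' - u)) := by rw [hx₁, smul_inv_smul₀ hρ0.ne']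
  have hyρ : y = ρ • (u + t₂ • (u' - u)) := by rw [hy₂, smul_inv_smul₀ hρ0.ne']
  have hkρ : k = ρ * (t₂ - t₁) := by
    refine smul_left_injective ℝ hdir (?_ : k • (u' - u) = (ρ * (t₂ - t₁)) • (u' - u))
    rw [← hxy, hxρ, hyρ]
    module
  refine ⟨by nlinarith, fun hkx => ?_⟩
  have ht₁0 : t₁ = 0 := by nlinarith
  rw [hxρ, ht₁0, zero_smul, add_zero, hkx]

theorem eq_of_add_smul_eq_add_smul {t₁ t₂ : ℝ}
    (hu : φ u = 1) (hu' : φ u' = 1) (huu' : u ≠ u') (hqp : q - p = r • (u' - u))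
    (h : p + t₁ • u' = q + t₂ • u) : t₁ = r ∧ t₂ = r := by
  have hdiff : t₁ • u' - t₂ • u = r • (u' - u) := by
    rw [← hqp, sub_eq_sub_iff_add_eq_add, add_comm, h, add_comm]
  have ht : t₁ = t₂ := by simpa [hu, hu', sub_eq_zero] using congrArg φ hdiff
  subst ht
  rw [← smul_sub] at hdiff
  exact ⟨smul_left_injective ℝ (sub_ne_zero.mpr huu'.symm) hdiff,
    smul_left_injective ℝ (sub_ne_zero.mpr huu'.symm) hdiff⟩

theorem le_apply_of_mem_cone_inter (hface : {x : X | ‖x‖ ≤ 1 ∧ φ x = 1} = segment ℝ u u')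
    (huu' : u ≠ u') (hr : 0 < r) (hqp : q - p = r • (u' - u)) {z : X}
    (hz : z ∈ cone p φ ∩ cone q φ) : φ p + r ≤ φ z ∧ (φ z = φ p + r → z = q + r • u) := by
  obtain ⟨hzp, hzq⟩ := hz
  have hφq : φ q = φ p := by
    simpa [sub_eq_zero] using apply_sub_eq_zero_of_face hface hqp
  obtain ⟨hle, heq⟩ := le_norm_of_sub_eq_smul hface huu' hr hzq hzp
    (by rw [sub_sub_sub_cancel_left, hqp])
  rw [← hzq, map_sub, hφq] at hle heq
  exact ⟨by linarith, fun h => eq_add_of_sub_eq' (heq (by linarith))⟩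

theorem apply_le_of_mem_cone_inter_neg
    (hface : {x : X | ‖x‖ ≤ 1 ∧ φ x = 1} = segment ℝ u u')
    (huu' : u ≠ u') (hr : 0 < r) (hqp : q - p = r • (u' - u)) {z : X}
    (hz : z ∈ cone p (-φ) ∩ cone q (-φ)) : φ z ≤ φ p - r ∧ (φ z = φ p - r → z = p - r • u) := by
  obtain ⟨hzp, hzq⟩ := hz
  rw [mem_cone_neg_iff] at hzp hzq
  obtain ⟨hle, heq⟩ := le_norm_of_sub_eq_smul hface huu' hr hzp hzq
    (by rw [sub_sub_sub_cancel_right, hqp])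
  rw [← hzp, map_sub] at hle heq
  exact ⟨by linarith, fun h => by rw [← heq (by linarith), sub_sub_cancel]⟩

theorem add_add_smul_mem_cone_inter (hφ : ‖φ‖ ≤ 1)
    (hface : {x : X | ‖x‖ ≤ 1 ∧ φ x = 1} = segment ℝ u u') (hr : 0 ≤ r)
    (hqp : q - p = r • (u' - u)) {h : ℝ} (hh : 0 ≤ h) :
    q + r • u + h • u' ∈ cone p φ ∩ cone q φ := by
  constructor
  · show φ _ = ‖_‖
    rw [show q + r • u + h • u' - p = (0 : ℝ) • u + (r + h) • u' by
      rw [← sub_add_cancel q p, hqp]; module]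
    exact apply_smul_add_smul_eq_norm hφ hface le_rfl (by linarith)
  · show φ _ = ‖_‖
    rw [add_assoc, add_sub_cancel_left]
    exact apply_smul_add_smul_eq_norm hφ hface hr hh

theorem sub_sub_smul_mem_cone_inter_neg (hφ : ‖φ‖ ≤ 1)
    (hface : {x : X | ‖x‖ ≤ 1 ∧ φ x = 1} = segment ℝ u u') (hr : 0 ≤ r)
    (hqp : q - p = r • (u' - u)) {h : ℝ} (hh : 0 ≤ h) :
    p - r • u - h • u ∈ cone p (-φ) ∩ cone q (-φ) := by
  simp only [mem_inter_iff, mem_cone_neg_iff]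
  constructor
  · rw [show p - (p - r • u - h • u) = (r + h) • u + (0 : ℝ) • u' by module]
    exact apply_smul_add_smul_eq_norm hφ hface (by linarith) le_rfl
  · rw [show q - (p - r • u - h • u) = h • u + r • u' by
      rw [← sub_add_cancel q p, hqp]; module]
    exact apply_smul_add_smul_eq_norm hφ hface hh hr

theorem surjOn_bisecSlab (hpq : p ≠ q) (hφd : φ (q - p) = 0) (hu : φ u = 1) :
    SurjOn φ (bisecSlab p q φ r) (Icc (φ p - r) (φ p + r)) := by
  intro c hc
  obtain ⟨T, hT⟩ := exists_add_add_smul_mem_bisec ((c - φ p) • u) hpq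
  have hlevel : φ (p + (c - φ p) • u + T • (q - p)) = c := by simp [hu, hφd]
  exact ⟨_, ⟨hT, by rwa [mem_preimage, hlevel]⟩, hlevel⟩

theorem isCompact_bisecSlab [ProperSpace X] (hu : ‖u‖ ≤ 1) (hφu : φ u = 1)
    (hker : ∀ x : X, φ x = 0 → ∃ s : ℝ, x = s • (q - p)) : IsCompact (bisecSlab p q φ r) := by
  refine Metric.isCompact_of_isClosed_isBounded ?_ ?_
  · exact (isClosed_eq (by fun_prop) (by fun_prop)).inter (isClosed_Icc.preimage φ.continuous)
  refine (Metric.isBounded_closedBall (x := p) (r := 3 * r + ‖q - p‖)).subset ?_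
  rintro z ⟨hz, hlow, hup⟩
  set a := (φ z - φ p) • u
  have ha : ‖a‖ ≤ r := by
    rw [norm_smul, Real.norm_eq_abs]
    nlinarith [abs_le.mpr (⟨by linarith, by linarith⟩ : -r ≤ φ z - φ p ∧ φ z - φ p ≤ r),
      abs_nonneg (φ z - φ p), norm_nonneg u]
  obtain ⟨T, hT⟩ := hker (z - p - a) (by simp [a, hφu])
  rw [Metric.mem_closedBall, dist_eq_norm]
  linarith [norm_sub_le_of_mem_bisec hz (eq_add_of_sub_eq' hT)]

theorem injOn_bisecSlab [Nontrivial X] (hface : {x : X | ‖x‖ ≤ 1 ∧ φ x = 1} = segment ℝ u u')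
    (huu' : u ≠ u') (hr : 0 < r) (hqp : q - p = r • (u' - u))
    (hker : ∀ x : X, φ x = 0 → ∃ s : ℝ, x = s • (q - p))
    (huniq : ∀ ψ : X →L[ℝ] ℝ, ‖ψ‖ = 1 → ψ (q - p) = 0 → ψ = φ ∨ ψ = -φ) :
    InjOn φ (bisecSlab p q φ r) := by
  intro z hz z' hz' hφ
  by_contra hne
  rcases mem_cone_inter_of_mem_bisec_of_apply_eq hker huniq hz.1 hz'.1 hne hφ with
    ⟨h, h'⟩ | ⟨h, h'⟩
  · obtain ⟨hle, heq⟩ := le_apply_of_mem_cone_inter hface huu' hr hqp h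
    obtain ⟨hle', heq'⟩ := le_apply_of_mem_cone_inter hface huu' hr hqp h'
    exact hne ((heq (le_antisymm hz.2.2 hle)).trans (heq' (le_antisymm hz'.2.2 hle')).symm)
  · obtain ⟨hle, heq⟩ := apply_le_of_mem_cone_inter_neg hface huu' hr hqp h
    obtain ⟨hle', heq'⟩ := apply_le_of_mem_cone_inter_neg hface huu' hr hqp h'
    exact hne ((heq (le_antisymm hle hz.2.1)).trans (heq' (le_antisymm hle' hz'.2.1)).symm)

theorem mem_cone_inter_of_lt_apply [Nontrivial X] (hφ : ‖φ‖ ≤ 1)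
    (hface : {x : X | ‖x‖ ≤ 1 ∧ φ x = 1} = segment ℝ u u') (huu' : u ≠ u') (hr : 0 < r)
    (hqp : q - p = r • (u' - u)) (hker : ∀ x : X, φ x = 0 → ∃ s : ℝ, x = s • (q - p))
    (huniq : ∀ ψ : X →L[ℝ] ℝ, ‖ψ‖ = 1 → ψ (q - p) = 0 → ψ = φ ∨ ψ = -φ) {z : X}
    (hz : z ∈ bisec p q) (hlt : φ p + r < φ z) : z ∈ cone p φ ∩ cone q φ := by
  have hφd := apply_sub_eq_zero_of_face hface hqp
  have hw := add_add_smul_mem_cone_inter hφ hface hr.le hqp (h := φ z - φ p - r) (by linarith)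
  rcases eq_or_ne z (q + r • u + (φ z - φ p - r) • u') with hzw | hne
  · rwa [hzw]
  have hφw : φ z = φ (q + r • u + (φ z - φ p - r) • u') := by
    rw [map_sub, sub_eq_zero] at hφd
    simp [hφd, (left_mem_face hface).2, (right_mem_face hface).2]
  rcases mem_cone_inter_of_mem_bisec_of_apply_eq hker huniq hz (cone_inter_subset_bisec hφd hw)
    hne hφw with ⟨h, -⟩ | ⟨h, -⟩
  · exact h
  · linarith [(apply_le_of_mem_cone_inter_neg hface huu' hr hqp h).1]

theorem mem_cone_inter_neg_of_apply_lt [Nontrivial X] (hφ : ‖φ‖ ≤ 1)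
    (hface : {x : X | ‖x‖ ≤ 1 ∧ φ x = 1} = segment ℝ u u') (huu' : u ≠ u') (hr : 0 < r)
    (hqp : q - p = r • (u' - u)) (hker : ∀ x : X, φ x = 0 → ∃ s : ℝ, x = s • (q - p))
    (huniq : ∀ ψ : X →L[ℝ] ℝ, ‖ψ‖ = 1 → ψ (q - p) = 0 → ψ = φ ∨ ψ = -φ) {z : X}
    (hz : z ∈ bisec p q) (hlt : φ z < φ p - r) : z ∈ cone p (-φ) ∩ cone q (-φ) := by
  have hφd := apply_sub_eq_zero_of_face hface hqp
  have hw := sub_sub_smul_mem_cone_inter_neg hφ hface hr.le hqp (h := φ p - r - φ z)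
    (by linarith)
  rcases eq_or_ne z (p - r • u - (φ p - r - φ z) • u) with hzw | hne
  · rwa [hzw]
  have hφw : φ z = φ (p - r • u - (φ p - r - φ z) • u) := by
    simp [(left_mem_face hface).2]
  rcases mem_cone_inter_of_mem_bisec_of_apply_eq hker huniq hz
    (cone_inter_subset_bisec (by simp [hφd]) hw) hne hφw with ⟨h, -⟩ | ⟨h, -⟩
  · linarith [(le_apply_of_mem_cone_inter hface huu' hr hqp h).1]
  · exact h

theorem bisec_eq_union [Nontrivial X] (hφ : ‖φ‖ ≤ 1)
    (hface : {x : X | ‖x‖ ≤ 1 ∧ φ x = 1} = segment ℝ u u') (huu' : u ≠ u') (hr : 0 < r)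
    (hqp : q - p = r • (u' - u)) (hker : ∀ x : X, φ x = 0 → ∃ s : ℝ, x = s • (q - p))
    (huniq : ∀ ψ : X →L[ℝ] ℝ, ‖ψ‖ = 1 → ψ (q - p) = 0 → ψ = φ ∨ ψ = -φ) :
    bisec p q = bisecSlab p q φ r ∪ (cone p φ ∩ cone q φ) ∪ (cone p (-φ) ∩ cone q (-φ)) := by
  have hφd := apply_sub_eq_zero_of_face hface hqp
  refine Subset.antisymm (fun z hz => ?_) (union_subset (union_subset (fun z hz => hz.1)
    (cone_inter_subset_bisec hφd)) (cone_inter_subset_bisec (by simp [hφd])))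
  rcases lt_or_ge (φ p + r) (φ z) with hup | hup
  · exact Or.inl (Or.inr (mem_cone_inter_of_lt_apply hφ hface huu' hr hqp hker huniq hz hup))
  rcases lt_or_ge (φ z) (φ p - r) with hlow | hlow
  · exact Or.inr (mem_cone_inter_neg_of_apply_lt hφ hface huu' hr hqp hker huniq hz hlow)
  · exact Or.inl (Or.inl ⟨hz, hlow, hup⟩)

theorem exists_homeomorph_bisecSlab [Nontrivial X] [ProperSpace X] (hpq : p ≠ q) (hφ : ‖φ‖ ≤ 1)
    (hface : {x : X | ‖x‖ ≤ 1 ∧ φ x = 1} = segment ℝ u u') (huu' : u ≠ u') (hr : 0 < r)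
    (hqp : q - p = r • (u' - u)) (hker : ∀ x : X, φ x = 0 → ∃ s : ℝ, x = s • (q - p))
    (huniq : ∀ ψ : X →L[ℝ] ℝ, ‖ψ‖ = 1 → ψ (q - p) = 0 → ψ = φ ∨ ψ = -φ) :
    ∃ f : Icc (0:ℝ) 1 ≃ₜ bisecSlab p q φ r,
      ((f ⟨0, by norm_num⟩ : bisecSlab p q φ r) : X) = p - r • u ∧
        ((f ⟨1, by norm_num⟩ : bisecSlab p q φ r) : X) = q + r • u := by
  have hφd := apply_sub_eq_zero_of_face hface hqp
  obtain ⟨hu, hφu⟩ := left_mem_face hface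
  have hinj := injOn_bisecSlab hface huu' hr hqp hker huniq
  obtain ⟨e, he⟩ := BijOn.exists_homeomorph ⟨fun z hz => hz.2, hinj, surjOn_bisecSlab hpq hφd hφu⟩
    (isCompact_bisecSlab hu hφu hker) φ.continuous.continuousOn
  let f := (iccHomeoI (φ p - r) (φ p + r) (by linarith)).symm.trans e
  have hf : ∀ (y : Icc (0:ℝ) 1) (z : X), z ∈ bisec p q → φ z = φ p - r + 2 * r * y →
      (f y : X) = z := by
    intro y z hz hφz
    refine hinj (f y).2 ⟨hz, ?_⟩ ?_
    · rw [mem_preimage, hφz, mem_Icc]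
      constructor <;> nlinarith [y.2.1, y.2.2]
    · rw [Homeomorph.trans_apply, he, iccHomeoI_symm_apply_coe, hφz]
      ring
  refine ⟨f, hf _ _ ?_ ?_, hf _ _ ?_ ?_⟩
  · exact cone_inter_subset_bisec (ψ := -φ) (by simp [hφd])
      (by simpa using sub_sub_smul_mem_cone_inter_neg hφ hface hr.le hqp le_rfl)
  · simp [hφu]
  · exact cone_inter_subset_bisec hφd
      (by simpa using add_add_smul_mem_cone_inter hφ hface hr.le hqp le_rfl)
  · rw [map_sub, sub_eq_zero] at hφd
    simp only [map_add, map_smul, smul_eq_mul, hφu, hφd]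
    ring

end Face

theorem bisector_decomposition_nonstrict
    (hdim : Module.finrank ℝ X = 2) (p q : X) (hpq : p ≠ q)
    (φ : X →L[ℝ] ℝ) (hφ : ‖φ‖ = 1)
    (u u' : X) (huu' : u ≠ u')
    (hface : {x : X | ‖x‖ ≤ 1 ∧ φ x = 1} = segment ℝ u u')
    (hlabel : ∃ c : ℝ, 0 < c ∧ u' - u = c • (q - p))
    (s_t s_b : X)
    (hst1 : ∃ t : ℝ, 0 ≤ t ∧ s_t = p + t • u')
    (hst2 : ∃ t : ℝ, 0 ≤ t ∧ s_t = q + t • u)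
    (hsb1 : ∃ t : ℝ, 0 ≤ t ∧ s_b = p - t • u)
    (hsb2 : ∃ t : ℝ, 0 ≤ t ∧ s_b = q - t • u') :
    ∃ B₁ : Set X,
      (∃ f : (Set.Icc (0:ℝ) 1) ≃ₜ B₁,
        ((f ⟨0, by norm_num⟩ : B₁) : X) = s_b ∧ ((f ⟨1, by norm_num⟩ : B₁) : X) = s_t) ∧
      bisec p q = B₁ ∪ (cone p φ ∩ cone q φ) ∪ (cone p (-φ) ∩ cone q (-φ)) := by
  obtain ⟨κ, hκ, hdir⟩ := hlabel
  have hr : 0 < κ⁻¹ := inv_pos.mpr hκ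
  have hqp : q - p = κ⁻¹ • (u' - u) := by rw [hdir, inv_smul_smul₀ hκ.ne']
  have hφu := (left_mem_face hface).2
  have hφu' := (right_mem_face hface).2
  have : FiniteDimensional ℝ X := .of_finrank_eq_succ hdim
  have : Nontrivial X := nontrivial_of_ne p q hpq
  have hspan := exists_eq_smul_add_smul_of_finrank_eq_two hdim
    (linearIndependent_pair_of_apply_eq_one (f := φ) hφu hφu' huu')
  have hker (x : X) := exists_eq_smul_of_apply_eq_zero (f := φ) hspan hφu hφu' hdir (x := x)
  have huniq (ψ : X →L[ℝ] ℝ) := eq_or_eq_neg_of_apply_eq_zero hφ hspan hφu hφu' hdir (ψ := ψ)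
  obtain ⟨t₁, -, rfl⟩ := hst1
  obtain ⟨t₂, -, hst⟩ := hst2
  obtain ⟨rfl, rfl⟩ := eq_of_add_smul_eq_add_smul hφu hφu' huu' hqp hst
  obtain ⟨t₃, -, rfl⟩ := hsb1
  obtain ⟨t₄, -, hsb⟩ := hsb2
  obtain ⟨rfl, rfl⟩ := eq_of_add_smul_eq_add_smul hφu hφu' huu' hqp
    (by linear_combination (norm := module) hsb)
  obtain ⟨f, hf₀, hf₁⟩ := exists_homeomorph_bisecSlab hpq hφ.le hface huu' hr hqp hker huniq
  exact ⟨_, ⟨f, hf₀, hf₁.trans hst.symm⟩, bisec_eq_union hφ.le hface huu' hr hqp hker huniq⟩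
end

section
/- Let (p,q) be a non-strict pair in X. Then the bisector bisec(p,q) has nonempty interior in ℝ². -/
variable {X : Type*} [NormedAddCommGroup X] [NormedSpace ℝ X]

/-!
A nondegenerate segment `[a, b]` of the unit sphere parallel to `p - q` has a supporting
functional `φ` of norm one with `φ a = φ b = 1`, so `φ p = φ q`. The norm agrees with `φ` on the
cone spanned by `a` and `b`, which in the plane has nonempty interior `S`. If `w - p` and `w - q`
both lie in `S`, then `‖w - p‖ = φ (w - p) = φ (w - q) = ‖w - q‖`; this is an open condition on
`w`, and it holds for `w = p + x` with `x` far enough out in `S`.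
-/

open Set Topology

theorem ContinuousLinearMap.apply_le_norm_of_opNorm_le_one {φ : X →L[ℝ] ℝ} (hφ : ‖φ‖ ≤ 1)
    (x : X) : φ x ≤ ‖x‖ :=
  (Real.le_norm_self _).trans (φ.le_of_opNorm_le hφ x |>.trans_eq (one_mul _))

theorem linearIndependent_pair_of_apply_eq_one_s1 {K M : Type*} [Field K] [AddCommGroup M]
    [Module K M] (φ : M →ₗ[K] K) {a b : M} (hab : a ≠ b) (ha : φ a = 1) (hb : φ b = 1) :
    LinearIndependent K ![a, b] := by
  refine LinearIndependent.pair_iff.mpr fun s u hsu => ?_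
  have hu : u = -s := (neg_eq_of_add_eq_zero_right (by simpa [ha, hb] using congrArg φ hsu)).symm
  subst hu
  have : s • (a - b) = 0 := by simpa [smul_sub, sub_eq_add_neg] using hsu
  simpa [sub_eq_zero, hab] using this

theorem exists_opNorm_le_one_apply_eq_one_of_segment_subset_sphere {a b : X}
    (hseg : segment ℝ a b ⊆ {x : X | ‖x‖ = 1}) :
    ∃ φ : X →L[ℝ] ℝ, ‖φ‖ ≤ 1 ∧ φ a = 1 ∧ φ b = 1 := by
  have hm : ‖midpoint ℝ a b‖ = 1 := hseg (midpoint_mem_segment a b)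
  obtain ⟨φ, hφ, hφm⟩ := exists_dual_vector ℝ (midpoint ℝ a b) (by simp [hm])
  have ha := φ.apply_le_norm_of_opNorm_le_one hφ.le a
  have hb := φ.apply_le_norm_of_opNorm_le_one hφ.le b
  rw [hseg (left_mem_segment ℝ a b)] at ha
  rw [hseg (right_mem_segment ℝ a b)] at hb
  have hsum : φ a + φ b = 2 := by
    rw [hm, midpoint_eq_smul_add, map_smul, map_add, smul_eq_mul] at hφm
    norm_num at hφm
    linarith
  exact ⟨φ, hφ.le, by linarith, by linarith⟩

section Cone

variable {φ : X →L[ℝ] ℝ}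

theorem mem_cone_zero_iff {z : X} : z ∈ cone 0 φ ↔ φ z = ‖z‖ := by
  simp [cone]

theorem mem_cone_iff {x z : X} : z ∈ cone x φ ↔ z - x ∈ cone 0 φ := by
  simp [cone]

theorem cone_inter_cone_subset_bisec {p q : X} (hpq : φ p = φ q) :
    cone p φ ∩ cone q φ ⊆ bisec p q := by
  rintro z ⟨hp, hq⟩
  calc ‖z - p‖ = φ (z - p) := (hp : φ (z - p) = ‖z - p‖).symm
    _ = φ (z - q) := by rw [map_sub, map_sub, hpq]
    _ = ‖z - q‖ := hq

theorem sum_smul_mem_cone_zero (hφ : ‖φ‖ ≤ 1) {ι : Type*} (s : Finset ι) {c : ι → ℝ}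
    {v : ι → X} (hc : ∀ i ∈ s, 0 ≤ c i) (hv : ∀ i ∈ s, v i ∈ cone 0 φ) :
    ∑ i ∈ s, c i • v i ∈ cone 0 φ := by
  rw [mem_cone_zero_iff]
  refine le_antisymm (φ.apply_le_norm_of_opNorm_le_one hφ _) ?_
  calc ‖∑ i ∈ s, c i • v i‖ ≤ ∑ i ∈ s, ‖c i • v i‖ := norm_sum_le _ _
    _ = φ (∑ i ∈ s, c i • v i) := by
      rw [map_sum]
      refine Finset.sum_congr rfl fun i hi => ?_
      rw [norm_smul, Real.norm_of_nonneg (hc i hi), ← mem_cone_zero_iff.mp (hv i hi),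
        map_smul, smul_eq_mul]

end Cone

theorem exists_mem_and_add_mem_of_isOpen {E : Type*} [AddCommGroup E] [Module ℝ E]
    [TopologicalSpace E] [ContinuousAdd E] [ContinuousSMul ℝ E] {S : Set E} (hS : IsOpen S)
    (hsmul : ∀ c : ℝ, 0 < c → ∀ x ∈ S, c • x ∈ S) {v : E} (hv : v ∈ S) (u : E) :
    ∃ x ∈ S, x + u ∈ S := by
  have hcont : Continuous fun ε : ℝ => v + ε • u := by fun_prop
  have hnhds : (fun ε : ℝ => v + ε • u) ⁻¹' S ∈ 𝓝 (0 : ℝ) :=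
    hcont.continuousAt.preimage_mem_nhds (by simpa using hS.mem_nhds hv)
  obtain ⟨ε, hε, hεpos⟩ : ((fun ε : ℝ => v + ε • u) ⁻¹' S ∩ Ioi 0).Nonempty :=
    Filter.nonempty_of_mem (Filter.inter_mem (nhdsWithin_le_nhds hnhds) self_mem_nhdsWithin)
  refine ⟨ε⁻¹ • v, hsmul _ (inv_pos.mpr hεpos) v hv, ?_⟩
  convert hsmul _ (inv_pos.mpr hεpos) _ hε using 1
  rw [smul_add, smul_smul, inv_mul_cancel₀ hεpos.ne', one_smul]

section Bisector

variable {φ : X →L[ℝ] ℝ} {p q : X}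

theorem interior_bisec_nonempty_of_isOpen_subset_cone {S : Set X} (hS : IsOpen S)
    (hsmul : ∀ c : ℝ, 0 < c → ∀ x ∈ S, c • x ∈ S) (hSne : S.Nonempty) (hSφ : S ⊆ cone 0 φ)
    (hpq : φ p = φ q) : (interior (bisec p q)).Nonempty := by
  obtain ⟨x, hx, hxpq⟩ := exists_mem_and_add_mem_of_isOpen hS hsmul hSne.some_mem (p - q)
  let U := (· - p) ⁻¹' S ∩ (· - q) ⁻¹' S
  have hU : IsOpen U := (hS.preimage (by fun_prop)).inter (hS.preimage (by fun_prop))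
  have hUsub : U ⊆ bisec p q := fun w hw =>
    cone_inter_cone_subset_bisec hpq ⟨mem_cone_iff.mpr (hSφ hw.1), mem_cone_iff.mpr (hSφ hw.2)⟩
  refine ⟨x + p, interior_maximal hUsub hU ⟨?_, ?_⟩⟩
  · simpa using hx
  · simpa [add_sub_assoc] using hxpq

theorem interior_bisec_nonempty_of_basis_mem_cone {ι : Type*} [Fintype ι]
    (B : Module.Basis ι ℝ X) (hφ : ‖φ‖ ≤ 1) (hB : ∀ i, B i ∈ cone 0 φ) (hpq : φ p = φ q) :
    (interior (bisec p q)).Nonempty := by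
  let S := B.equivFunL ⁻¹' univ.pi fun _ => Ioi 0
  refine interior_bisec_nonempty_of_isOpen_subset_cone (S := S)
    ((isOpen_set_pi finite_univ fun _ _ => isOpen_Ioi).preimage B.equivFunL.continuous)
    (fun c hc x hx i _ => ?_) ⟨B.equivFunL.symm 1, by simp [S]⟩ (fun x hx => ?_) hpq
  · simpa using mul_pos hc (hx i trivial)
  · rw [← B.sum_equivFun x]
    exact sum_smul_mem_cone_zero hφ _ (fun i _ => (hx i trivial).le) fun i _ => hB i

end Bisector

theorem bisector_nonstrict_has_interior_points_general
    (hdim : Module.finrank ℝ X = 2) (p q : X)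
    (hns : ¬ strictPair p q) :
    (interior (bisec p q)).Nonempty := by
  have : FiniteDimensional ℝ X := .of_finrank_eq_succ hdim
  obtain ⟨a, b, hab, hseg, t, ht⟩ := not_not.mp hns
  obtain ⟨φ, hφ, ha, hb⟩ := exists_opNorm_le_one_apply_eq_one_of_segment_subset_sphere hseg
  have hφpq : φ p = φ q := by
    have ht0 : t ≠ 0 := by
      rintro rfl
      exact hab (sub_eq_zero.mp (by simpa using ht)).symm
    have : t * φ (p - q) = 0 := by
      rw [← smul_eq_mul, ← map_smul, ← ht, map_sub, ha, hb, sub_self]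
    simpa [sub_eq_zero, ht0] using this
  have hli := linearIndependent_pair_of_apply_eq_one_s1 (φ : X →ₗ[ℝ] ℝ) hab ha hb
  have hcard : Fintype.card (Fin 2) = Module.finrank ℝ X := by simp [hdim]
  refine interior_bisec_nonempty_of_basis_mem_cone
    (basisOfLinearIndependentOfCardEqFinrank hli hcard) hφ (fun i => ?_) hφpq
  rw [coe_basisOfLinearIndependentOfCardEqFinrank, mem_cone_zero_iff]
  fin_cases i
  · simpa [ha] using (hseg (left_mem_segment ℝ a b)).symm
  · simpa [hb] using (hseg (right_mem_segment ℝ a b)).symm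

theorem bisector_nonstrict_has_interior_points
    (hdim : Module.finrank ℝ X = 2) (p q : X) (hpq : p ≠ q)
    (hns : ¬ strictPair p q) :
    (interior (bisec p q)).Nonempty :=
  bisector_nonstrict_has_interior_points_general hdim p q hns
end

section
/- Let (p,q) be a non-strict pair in X. Then bisec(p,q) is contained in the interior of the bent strip conv({p + t·u : t ≥ 0} ∪ {q + t·u′ : t ≥ 0}) ∪ conv({p − t·u′ : t ≥ 0} ∪ {q − t·u : t ≥ 0}), where conv denotes the convex hull. -/
variable {X : Type*} [NormedAddCommGroup X] [NormedSpace ℝ X]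

/-!
Put `e = q - p`, so `φ e = 0` and `u' = u + c • e` with `c > 0`. The face hypothesis says that the
convex function `s ↦ ‖u + s • e‖` has sublevel set `{· ≤ 1} = [0, c]`; hence if it takes equal
values at `s < t`, then `0 < t` and `s < c`. Writing `z - p = α • e + β • u` with `β = φ (z - p)`,
for `β ≠ 0` the bisector equation `‖z - p‖ = ‖z - q‖` is such an equality at `α / β` and
`(α - 1) / β`, which yields the open condition `min 0 (c β) < α < max 1 (1 + c β)`; for `β = 0`
it forces `α = 1 / 2`. Every point satisfying that open condition lies in one of the two hulls.
-/

open Set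

theorem ConvexOn.lt_of_apply_eq_of_sublevel_eq_Icc {𝕜 β : Type*} [Field 𝕜] [LinearOrder 𝕜]
    [IsStrictOrderedRing 𝕜] [AddCommMonoid β] [LinearOrder β] [IsOrderedCancelAddMonoid β]
    [Module 𝕜 β] [PosSMulStrictMono 𝕜 β] {f : 𝕜 → β} (hf : ConvexOn 𝕜 univ f)
    {m : β} {a b s t : 𝕜} (hab : a ≤ b) (hsub : ∀ x, f x ≤ m ↔ x ∈ Icc a b)
    (hst : s < t) (h : f s = f t) : a < t ∧ s < b := by
  have ha : f a ≤ m := (hsub a).2 ⟨le_rfl, hab⟩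
  have hb : f b ≤ m := (hsub b).2 ⟨hab, le_rfl⟩
  constructor
  · by_contra! hta
    have hft : f t ≤ f a := hf.le_right_of_left_le'' trivial trivial hst hta h.le
    have hs := (hsub s).1 (h.trans_le (hft.trans ha))
    linarith [hs.1]
  · by_contra! hbs
    have hfs : f s ≤ f b := hf.le_left_of_right_le'' trivial trivial hbs hst h.ge
    have ht := (hsub t).1 (h.symm.trans_le (hfs.trans hb))
    linarith [ht.2]

theorem add_smul_mem_segment_iff {E : Type*} [AddCommGroup E] [Module ℝ E] {x v : E}
    (hv : v ≠ 0) {c s : ℝ} (hc : 0 < c) :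
    x + s • v ∈ segment ℝ x (x + c • v) ↔ s ∈ Icc 0 c := by
  rw [segment_eq_image', add_sub_cancel_left]
  simp only [mem_image, add_right_inj, smul_smul, (smul_left_injective ℝ hv).eq_iff]
  constructor
  · rintro ⟨θ, ⟨h0, h1⟩, rfl⟩
    exact ⟨by positivity, by nlinarith⟩
  · rintro ⟨h0, h1⟩
    exact ⟨s / c, ⟨by positivity, (div_le_one hc).2 h1⟩, div_mul_cancel₀ s hc.ne'⟩

theorem norm_add_smul_le_one_iff {φ : X →L[ℝ] ℝ} {u u' e : X} {c : ℝ} (hc : 0 < c) (he : e ≠ 0)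
    (hφe : φ e = 0) (hu' : u' - u = c • e)
    (hface : {x : X | ‖x‖ ≤ 1 ∧ φ x = 1} = segment ℝ u u') (s : ℝ) :
    ‖u + s • e‖ ≤ 1 ↔ s ∈ Icc 0 c := by
  have hφu : φ u = 1 := (hface.ge (left_mem_segment ℝ u u')).2
  rw [← add_smul_mem_segment_iff he hc, ← eq_add_of_sub_eq' hu', ← hface]
  simp [hφu, hφe]

theorem exists_coord_of_finrank_eq_two (hdim : Module.finrank ℝ X = 2) {e u : X} (he : e ≠ 0)
    {φ : X →L[ℝ] ℝ} (hφe : φ e = 0) (hφu : φ u = 1) :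
    ∃ ψ : X →L[ℝ] ℝ, ∀ x : X, x = ψ x • e + φ x • u := by
  have : FiniteDimensional ℝ X := Module.finite_of_finrank_eq_succ hdim
  have hli : LinearIndependent ℝ ![e, u] := by
    refine LinearIndependent.pair_iff.2 fun s t hst => ?_
    have ht : t = 0 := by simpa [hφe, hφu] using congrArg φ hst
    subst ht
    simpa [he] using hst
  have hcard : Fintype.card (Fin 2) = Module.finrank ℝ X := by simp [hdim]
  set B := basisOfLinearIndependentOfCardEqFinrank hli hcard
  have hB : ⇑B = ![e, u] := coe_basisOfLinearIndependentOfCardEqFinrank hli hcard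
  refine ⟨LinearMap.toContinuousLinearMap (B.coord 0), fun x => ?_⟩
  have hrep := B.sum_repr x
  simp only [Fin.sum_univ_two, hB, Matrix.cons_val_zero, Matrix.cons_val_one] at hrep
  have hφx : φ x = B.repr x 1 := by
    conv_lhs => rw [← hrep]
    simp [hφe, hφu]
  simpa [hφx] using hrep.symm

theorem convexOn_norm_add_smul (u e : X) : ConvexOn ℝ univ (fun s : ℝ => ‖u + s • e‖) :=
  (convexOn_univ_norm.translate_right u).comp_linearMap (LinearMap.toSpanSingleton ℝ X e)

section Coordinates

variable {u e : X} {c α β : ℝ}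

theorem pos_and_lt_of_norm_eq_of_pos (hc : 0 ≤ c) (hsub : ∀ s, ‖u + s • e‖ ≤ 1 ↔ s ∈ Icc 0 c)
    (hβ : 0 < β) (h : ‖α • e + β • u‖ = ‖(α - 1) • e + β • u‖) : 0 < α ∧ α < 1 + c * β := by
  have hscale (x : ℝ) : ‖x • e + β • u‖ = β * ‖u + (x / β) • e‖ := by
    rw [← norm_smul_of_nonneg hβ.le, smul_add, smul_smul, mul_div_cancel₀ _ hβ.ne', add_comm]
  rw [hscale, hscale] at h
  obtain ⟨h0, h1⟩ := (convexOn_norm_add_smul u e).lt_of_apply_eq_of_sublevel_eq_Icc hc hsub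
    (div_lt_div_of_pos_right (sub_one_lt α) hβ) (mul_left_cancel₀ hβ.ne' h).symm
  rw [div_lt_iff₀ hβ] at h1
  exact ⟨(div_pos_iff_of_pos_right hβ).1 h0, by linarith⟩

theorem min_lt_and_lt_max_of_norm_eq (he : e ≠ 0) (hc : 0 ≤ c)
    (hsub : ∀ s, ‖u + s • e‖ ≤ 1 ↔ s ∈ Icc 0 c)
    (h : ‖α • e + β • u‖ = ‖(α - 1) • e + β • u‖) :
    min 0 (c * β) < α ∧ α < max 1 (1 + c * β) := by
  rcases lt_trichotomy β 0 with hβ | rfl | hβ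
  · have h' : ‖(1 - α) • e + (-β) • u‖ = ‖(1 - α - 1) • e + (-β) • u‖ := by
      rw [show (1 - α) • e + (-β) • u = -((α - 1) • e + β • u) by module,
        show (1 - α - 1) • e + (-β) • u = -(α • e + β • u) by module, norm_neg, norm_neg, h]
    obtain ⟨h0, h1⟩ := pos_and_lt_of_norm_eq_of_pos hc hsub (neg_pos.2 hβ) h'
    rw [min_eq_right (by nlinarith), max_eq_left (by nlinarith)]
    constructor <;> linarith
  · have hα : |α| = |α - 1| := by
      simpa [norm_smul, he] using h
    have : α = 1 / 2 := by
      rcases abs_eq_abs.1 hα with h | h <;> linarith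
    subst this
    norm_num
  · obtain ⟨h0, h1⟩ := pos_and_lt_of_norm_eq_of_pos hc hsub hβ h
    rw [min_eq_left (by positivity), max_eq_right (by nlinarith)]
    exact ⟨h0, h1⟩

end Coordinates

section BentStrip

variable {E : Type*} [AddCommGroup E] [Module ℝ E]

def bentStrip (p q u u' : E) : Set E :=
  convexHull ℝ ({z : E | ∃ t : ℝ, 0 ≤ t ∧ z = p + t • u} ∪
      {z : E | ∃ t : ℝ, 0 ≤ t ∧ z = q + t • u'}) ∪
    convexHull ℝ ({z : E | ∃ t : ℝ, 0 ≤ t ∧ z = p - t • u'} ∪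
      {z : E | ∃ t : ℝ, 0 ≤ t ∧ z = q - t • u})

variable {p q u u' w : E} {c α β : ℝ}

theorem mem_convexHull_rays_of_coords (hc : 0 ≤ c) (hu' : u' - u = c • (q - p))
    (hw : w - p = α • (q - p) + β • u) (hβ : 0 ≤ β) (hα₀ : 0 ≤ α) (hα₁ : α ≤ 1 + c * β) :
    w ∈ convexHull ℝ ({z : E | ∃ t : ℝ, 0 ≤ t ∧ z = p + t • u} ∪
      {z : E | ∃ t : ℝ, 0 ≤ t ∧ z = q + t • u'}) := by
  have hD : 0 < 1 + c * β := by positivity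
  refine segment_subset_convexHull (x := p + β • u) (y := q + β • u')
    (Or.inl ⟨β, hβ, rfl⟩) (Or.inr ⟨β, hβ, rfl⟩)
    ⟨1 - α / (1 + c * β), α / (1 + c * β), sub_nonneg.2 ((div_le_one hD).2 hα₁),
      by positivity, by ring, ?_⟩
  obtain ⟨e, rfl⟩ : ∃ e, q = p + e := ⟨q - p, by abel⟩
  rw [add_sub_cancel_left] at hu' hw
  rw [eq_add_of_sub_eq' hu', eq_add_of_sub_eq' hw]
  match_scalars <;> field_simp <;> ring

theorem mem_bentStrip_of_coords (hc : 0 ≤ c) (hu' : u' - u = c • (q - p))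
    (hw : w - p = α • (q - p) + β • u) (hα₀ : min 0 (c * β) < α) (hα₁ : α < max 1 (1 + c * β)) :
    w ∈ bentStrip p q u u' := by
  rcases le_total 0 β with hβ | hβ
  · rw [min_eq_left (by positivity)] at hα₀
    rw [max_eq_right (by nlinarith)] at hα₁
    exact Or.inl (mem_convexHull_rays_of_coords hc hu' hw hβ hα₀.le hα₁.le)
  · rw [min_eq_right (by nlinarith)] at hα₀
    rw [max_eq_left (by nlinarith)] at hα₁
    -- the lower hull is the upper hull of the data `(q, p, -u, -u')`
    have hu'' : -u' - -u = c • (p - q) := by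
      rw [neg_sub_neg, ← neg_sub, hu', ← smul_neg, neg_sub]
    have hw' : w - q = (1 - α) • (p - q) + (-β) • -u := by
      rw [← sub_sub_sub_cancel_right w q p, hw]; module
    have := mem_convexHull_rays_of_coords hc hu'' hw' (neg_nonneg.2 hβ) (by linarith)
      (by linarith)
    simp only [smul_neg, ← sub_eq_add_neg] at this
    exact Or.inr (union_comm _ _ ▸ this)

end BentStrip

theorem bisector_subset_interior_bent_strip_general
    (hdim : Module.finrank ℝ X = 2) (p q : X) (hpq : p ≠ q)
    (φ : X →L[ℝ] ℝ) (hφpq : φ (p - q) = 0)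
    (u u' : X)
    (hface : {x : X | ‖x‖ ≤ 1 ∧ φ x = 1} = segment ℝ u u')
    (hlabel : ∃ c : ℝ, 0 < c ∧ u' - u = c • (q - p)) :
    bisec p q ⊆ interior
      (convexHull ℝ ({z : X | ∃ t : ℝ, 0 ≤ t ∧ z = p + t • u} ∪
          {z : X | ∃ t : ℝ, 0 ≤ t ∧ z = q + t • u'}) ∪
       convexHull ℝ ({z : X | ∃ t : ℝ, 0 ≤ t ∧ z = p - t • u'} ∪
          {z : X | ∃ t : ℝ, 0 ≤ t ∧ z = q - t • u})) := by
  obtain ⟨c, hc, hu'⟩ := hlabel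
  have he : q - p ≠ 0 := sub_ne_zero.2 hpq.symm
  have hφe : φ (q - p) = 0 := by rw [← neg_sub, map_neg, hφpq, neg_zero]
  have hφu : φ u = 1 := (hface.ge (left_mem_segment ℝ u u')).2
  obtain ⟨ψ, hψ⟩ := exists_coord_of_finrank_eq_two hdim he hφe hφu
  let V : Set X :=
    {w | min 0 (c * φ (w - p)) < ψ (w - p) ∧ ψ (w - p) < max 1 (1 + c * φ (w - p))}
  have hV : IsOpen V := (isOpen_lt (by fun_prop) (by fun_prop)).and
    (isOpen_lt (by fun_prop) (by fun_prop))
  have hVstrip : V ⊆ bentStrip p q u u' := fun w hw =>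
    mem_bentStrip_of_coords hc.le hu' (hψ (w - p)) hw.1 hw.2
  intro z hz
  refine interior_maximal hVstrip hV (min_lt_and_lt_max_of_norm_eq he hc.le
    (norm_add_smul_le_one_iff hc he hφe hu' hface) ?_)
  rw [sub_smul, one_smul, ← add_sub_right_comm, ← hψ, sub_sub_sub_cancel_right]
  exact hz

theorem bisector_subset_interior_bent_strip
    (hdim : Module.finrank ℝ X = 2) (p q : X) (hpq : p ≠ q)
    (hns : ¬ strictPair p q)
    (φ : X →L[ℝ] ℝ) (hφ : ‖φ‖ = 1) (hφpq : φ (p - q) = 0)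
    (u u' : X) (huu' : u ≠ u')
    (hface : {x : X | ‖x‖ ≤ 1 ∧ φ x = 1} = segment ℝ u u')
    (hlabel : ∃ c : ℝ, 0 < c ∧ u' - u = c • (q - p)) :
    bisec p q ⊆ interior
      (convexHull ℝ ({z : X | ∃ t : ℝ, 0 ≤ t ∧ z = p + t • u} ∪
          {z : X | ∃ t : ℝ, 0 ≤ t ∧ z = q + t • u'}) ∪
       convexHull ℝ ({z : X | ∃ t : ℝ, 0 ≤ t ∧ z = p - t • u'} ∪
          {z : X | ∃ t : ℝ, 0 ≤ t ∧ z = q - t • u})) :=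
  bisector_subset_interior_bent_strip_general hdim p q hpq φ hφpq u u' hface hlabel
end

section
/- Let (p,q) be a non-strict pair in X and set B_t¹ = {z ∈ bisec(p,q) : 0 < φ(z − p) ≤ φ(s_t − p)}. Then for every z ∈ B_t¹, the set B_t¹ is contained in the double cone {z + λ(p − z) + μ(q − z) : λ, μ ∈ ℝ, λμ ≥ 0}. In particular, B_t¹ ⊆ conv{p, q, s_t}. -/
variable {X : Type*} [NormedAddCommGroup X] [NormedSpace ℝ X]

/-!
Write `z = p + α • (q - p) + β • u` with `β = φ (z - p)`. Since `X` is a plane, a functional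
supporting the ball at an interior point of a segment of a sphere parallel to `q - p` is `±φ`; so
the convex function `α ↦ ‖α • (q - p) + β • u‖` takes one value at three points only if that value
is its minimum `β`, attained exactly on the plateau `0 ≤ α ≤ c β`. This shows that a bisector
point at height `β ≤ t` has `c β ≤ α ≤ 1`, and that a bisector point `z'` at a lower height `k β`
has `k α ≤ α' ≤ 1 - k + k α`, i.e. `z' ∈ conv {p, q, z}`. For `z = s_t` this is the convex hull
statement; exchanging `z` and `z'` when `z'` is higher gives the double cone.
-/

open Set Module

theorem convexOn_norm_smul_add (v w : X) : ConvexOn ℝ univ fun a : ℝ => ‖a • v + w‖ := by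
  refine ⟨convex_univ, fun x _ y _ a b ha hb hab => ?_⟩
  calc ‖(a • x + b • y) • v + w‖ = ‖a • (x • v + w) + b • (y • v + w)‖ := by
        congr 1; linear_combination (norm := module) (-hab) • w
    _ ≤ a • ‖x • v + w‖ + b • ‖y • v + w‖ := by
        rw [smul_eq_mul, smul_eq_mul, ← norm_smul_of_nonneg ha, ← norm_smul_of_nonneg hb]
        exact norm_add_le _ _

theorem ConvexOn.monotone_sub_comp_sub_one {f : ℝ → ℝ} (hf : ConvexOn ℝ univ f) :
    Monotone fun a => f a - f (a - 1) := by
  intro a b hab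
  have slope_eq (x : ℝ) : f x - f (x - 1) = slope f (x - 1) x := by simp [slope_def_field]
  simp only [slope_eq]
  calc slope f (a - 1) a
      ≤ slope f (a - 1) b :=
        hf.slope_mono trivial ⟨trivial, (sub_one_lt a).ne'⟩ ⟨trivial, by simp; linarith⟩ hab
    _ = slope f b (a - 1) := slope_comm ..
    _ ≤ slope f b (b - 1) :=
        hf.slope_mono trivial ⟨trivial, by simp; linarith⟩ ⟨trivial, (sub_one_lt b).ne⟩
          (by linarith)
    _ = slope f (b - 1) b := slope_comm ..

theorem exists_eq_smul_add_apply_smul (hX : finrank ℝ X = 2) {φ : X →L[ℝ] ℝ} {e u : X}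
    (he : e ≠ 0) (hφe : φ e = 0) (hφu : φ u = 1) (v : X) : ∃ a : ℝ, v = a • e + φ v • u := by
  have hind : LinearIndependent ℝ ![e, u] := by
    refine (LinearIndependent.pair_iff' he).2 fun a hau => ?_
    simpa [hφe, hφu] using congrArg φ hau
  have hv : v ∈ Submodule.span ℝ {e, u} := by
    rw [← Matrix.range_cons_cons_empty e u ![], hind.span_eq_top_of_card_eq_finrank (by simp [hX])]
    trivial
  obtain ⟨a, b, rfl⟩ := Submodule.mem_span_pair.1 hv
  exact ⟨a, by simp [hφe, hφu]⟩

theorem exists_eq_smul_of_apply_eq_zero_s7 (hX : finrank ℝ X = 2) {φ ψ : X →L[ℝ] ℝ} (hφ : φ ≠ 0)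
    {d : X} (hd : d ≠ 0) (hφd : φ d = 0) (hψd : ψ d = 0) : ∃ r : ℝ, ψ = r • φ := by
  obtain ⟨v, hv⟩ : ∃ v, φ v ≠ 0 := by
    by_contra! h
    exact hφ (ContinuousLinearMap.ext h)
  have hφv : φ ((φ v)⁻¹ • v) = 1 := by simp [hv]
  refine ⟨ψ ((φ v)⁻¹ • v), ContinuousLinearMap.ext fun x => ?_⟩
  obtain ⟨a, hx⟩ := exists_eq_smul_add_apply_smul hX hd hφd hφv x
  conv_lhs => rw [hx]
  simp [hψd, mul_comm]

theorem norm_eq_abs_of_mem_openSegment (hX : finrank ℝ X = 2) {φ : X →L[ℝ] ℝ} (hφ : ‖φ‖ = 1)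
    {x y w : X} (hxy : x ≠ y) (hφxy : φ x = φ y) (hw : w ∈ openSegment ℝ x y)
    (hx : ‖x‖ = ‖w‖) (hy : ‖y‖ = ‖w‖) : ‖w‖ = |φ w| := by
  have abs_le_norm (χ : X →L[ℝ] ℝ) (hχ : ‖χ‖ ≤ 1) (v : X) : |χ v| ≤ ‖v‖ := by
    simpa using χ.le_of_opNorm_le hχ v
  obtain ⟨ψ, hψ, hψw⟩ := exists_dual_vector'' ℝ w
  replace hψw : ψ w = ‖w‖ := by simpa using hψw
  -- `ψ` supports the ball at `w`, hence at both ends of the segment, so it vanishes on `x - y`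
  have hψxy : ψ x = ψ y := by
    obtain ⟨a, b, ha, hb, hab, rfl⟩ := hw
    have hψx := (le_abs_self _).trans ((abs_le_norm ψ hψ x).trans hx.le)
    have hψy := (le_abs_self _).trans ((abs_le_norm ψ hψ y).trans hy.le)
    have hsum : a * (‖a • x + b • y‖ - ψ x) + b * (‖a • x + b • y‖ - ψ y) = 0 := by
      simp only [map_add, map_smul, smul_eq_mul] at hψw
      linear_combination ‖a • x + b • y‖ * hab - hψw
    obtain ⟨h1, h2⟩ := (add_eq_zero_iff_of_nonneg (mul_nonneg ha.le (sub_nonneg.2 hψx))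
      (mul_nonneg hb.le (sub_nonneg.2 hψy))).1 hsum
    have := (mul_eq_zero.1 h1).resolve_left ha.ne'
    have := (mul_eq_zero.1 h2).resolve_left hb.ne'
    linarith
  have hφ0 : φ ≠ 0 := by rintro rfl; simp at hφ
  obtain ⟨r, rfl⟩ := exists_eq_smul_of_apply_eq_zero_s7 (ψ := ψ) hX hφ0 (sub_ne_zero.2 hxy)
    (by simp [hφxy]) (by simp [hψxy])
  have hr : |r| ≤ 1 := by simpa [norm_smul, hφ] using hψ
  refine le_antisymm ?_ (abs_le_norm φ hφ.le w)
  calc ‖w‖ = r * φ w := by simpa using hψw.symm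
    _ ≤ |r| * |φ w| := (le_abs_self _).trans (abs_mul _ _).le
    _ ≤ |φ w| := mul_le_of_le_one_left (abs_nonneg _) hr

theorem smul_add_mem_openSegment {E : Type*} [AddCommGroup E] [Module ℝ E] {a₁ a₂ a₃ : ℝ}
    (h₁₂ : a₁ < a₂) (h₂₃ : a₂ < a₃) (v w : E) :
    a₂ • v + w ∈ openSegment ℝ (a₁ • v + w) (a₃ • v + w) := by
  have h₁₃ : 0 < a₃ - a₁ := by linarith
  refine ⟨(a₃ - a₂) / (a₃ - a₁), (a₂ - a₁) / (a₃ - a₁), by bound, by bound, by field_simp; ring, ?_⟩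
  match_scalars <;> field_simp <;> ring

theorem exists_eq_add_smul_sub_of_eq {E : Type*} [AddCommGroup E] [Module ℝ E] {p q z z' : E}
    {l m : ℝ} (hl : 0 ≤ l) (hm : 0 ≤ m) (hlm : l + m < 1)
    (h : z = z' + l • (p - z') + m • (q - z')) :
    ∃ l' m' : ℝ, 0 ≤ l' * m' ∧ z' = z + l' • (p - z) + m' • (q - z) := by
  have hn : 0 < 1 - l - m := by linarith
  refine ⟨-l / (1 - l - m), -m / (1 - l - m), ?_, ?_⟩
  · rw [neg_div, neg_div, neg_mul_neg]; positivity
  · subst h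
    match_scalars <;> field_simp <;> ring

theorem add_smul_sub_add_smul_sub_mem_convexHull {E : Type*} [AddCommGroup E] [Module ℝ E]
    {p q z : E} {l m : ℝ} (hl : 0 ≤ l) (hm : 0 ≤ m) (hlm : l + m ≤ 1) :
    z + l • (p - z) + m • (q - z) ∈ convexHull ℝ {p, q, z} := by
  have h := (convex_convexHull ℝ {p, q, z}).sum_mem (t := Finset.univ)
    (w := ![l, m, 1 - l - m]) (z := ![p, q, z])
    (by intro i _; fin_cases i <;> simp <;> linarith)
    (by simp [Fin.sum_univ_three])
    (by intro i _; fin_cases i <;> apply subset_convexHull <;> simp)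
  convert h using 1
  simp [Fin.sum_univ_three]
  module

structure IsSegmentFace (φ : X →L[ℝ] ℝ) (u e : X) (c : ℝ) : Prop where
  norm_eq_one : ‖φ‖ = 1
  ne_zero : e ≠ 0
  pos : 0 < c
  face_eq : {x : X | ‖x‖ ≤ 1 ∧ φ x = 1} = segment ℝ u (u + c • e)

namespace IsSegmentFace

variable {φ : X →L[ℝ] ℝ} {u e : X} {c : ℝ}

theorem apply_le_norm (hF : IsSegmentFace φ u e c) (x : X) : φ x ≤ ‖x‖ := by
  simpa [hF.norm_eq_one] using (le_abs_self (φ x)).trans (φ.le_opNorm x)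

theorem apply_base (hF : IsSegmentFace φ u e c) : φ u = 1 := by
  have hu : u ∈ {x : X | ‖x‖ ≤ 1 ∧ φ x = 1} := hF.face_eq ▸ left_mem_segment ℝ _ _
  exact hu.2

theorem apply_dir (hF : IsSegmentFace φ u e c) : φ e = 0 := by
  have hu' : u + c • e ∈ {x : X | ‖x‖ ≤ 1 ∧ φ x = 1} := hF.face_eq ▸ right_mem_segment ℝ _ _
  simpa [hF.apply_base, hF.pos.ne'] using hu'.2

theorem swap (hF : IsSegmentFace φ u e c) : IsSegmentFace φ (u + c • e) (-e) c where
  norm_eq_one := hF.norm_eq_one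
  ne_zero := neg_ne_zero.2 hF.ne_zero
  pos := hF.pos
  face_eq := by rw [hF.face_eq, segment_symm, smul_neg, add_neg_cancel_right]

theorem norm_add_smul_eq_one_iff (hF : IsSegmentFace φ u e c) {s : ℝ} :
    ‖u + s • e‖ = 1 ↔ 0 ≤ s ∧ s ≤ c := by
  have hφ : φ (u + s • e) = 1 := by simp [hF.apply_base, hF.apply_dir]
  have hface : ‖u + s • e‖ = 1 ↔ u + s • e ∈ segment ℝ u (u + c • e) := by
    rw [← hF.face_eq]
    exact ⟨fun h => ⟨h.le, hφ⟩, fun h => le_antisymm h.1 (hφ ▸ hF.apply_le_norm _)⟩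
  rw [hface, segment_eq_image']
  simp only [add_sub_cancel_left, smul_smul, mem_image, mem_Icc, add_right_inj,
    (smul_left_injective ℝ hF.ne_zero).eq_iff]
  constructor
  · rintro ⟨θ, ⟨hθ0, hθ1⟩, rfl⟩
    exact ⟨mul_nonneg hθ0 hF.pos.le, mul_le_of_le_one_left hF.pos.le hθ1⟩
  · rintro ⟨hs0, hsc⟩
    exact ⟨s / c, ⟨div_nonneg hs0 hF.pos.le, div_le_one_of_le₀ hsc hF.pos.le⟩,
      div_mul_cancel₀ s hF.pos.ne'⟩

theorem norm_smul_add_smul_eq_iff (hF : IsSegmentFace φ u e c) {a b : ℝ} (hb : 0 < b) :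
    ‖a • e + b • u‖ = b ↔ 0 ≤ a ∧ a ≤ c * b := by
  have hab : a • e + b • u = b • (u + (a / b) • e) := by
    rw [smul_add, smul_smul, mul_div_cancel₀ a hb.ne', add_comm]
  rw [hab, norm_smul_of_nonneg hb.le, mul_eq_left₀ hb.ne', hF.norm_add_smul_eq_one_iff,
    le_div_iff₀ hb, zero_mul, div_le_iff₀ hb]

theorem norm_base (hF : IsSegmentFace φ u e c) : ‖u‖ = 1 := by
  simpa using hF.norm_add_smul_eq_one_iff.2 ⟨le_rfl, hF.pos.le⟩

theorem le_norm_smul_add_smul (hF : IsSegmentFace φ u e c) (a b : ℝ) : b ≤ ‖a • e + b • u‖ := by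
  simpa [hF.apply_base, hF.apply_dir] using hF.apply_le_norm (a • e + b • u)

-- `p + α • e + β • u` lies on `bisec p (p + e)` iff `‖α • e + β • u‖ = ‖(α - 1) • e + β • u‖`.

theorem mul_le_of_bisector (hF : IsSegmentFace φ u e c) {α β : ℝ} (hβ : 0 < β)
    (hcβ : c * β ≤ 1) (hα : ‖α • e + β • u‖ = ‖(α - 1) • e + β • u‖) : c * β ≤ α := by
  by_contra! hlt
  have hflat : ‖α • e + β • u‖ = β := by
    rcases le_or_gt 0 α with h0 | h0
    · exact (hF.norm_smul_add_smul_eq_iff hβ).2 ⟨h0, hlt.le⟩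
    · refine le_antisymm ?_ (hF.le_norm_smul_add_smul α β)
      have h := (convexOn_norm_smul_add e (β • u)).le_right_of_left_le (x := α - 1) (y := 0)
        trivial trivial (by rw [openSegment_eq_Ioo (by linarith)]; exact ⟨by linarith, h0⟩)
        hα.symm.le
      simpa [norm_smul, hF.norm_base, abs_of_pos hβ] using h
  have := ((hF.norm_smul_add_smul_eq_iff hβ).1 (hα.symm.trans hflat)).1
  linarith

-- Exchanging `p` and `p + e` turns the coordinates `(α, β)` with respect to `(e, u)` into
-- `(1 - α + c * β, β)` with respect to `(-e, u + c • e)`.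
theorem norm_swap_eq_of_norm_eq {α β : ℝ} (c : ℝ)
    (hα : ‖α • e + β • u‖ = ‖(α - 1) • e + β • u‖) :
    ‖(1 - α + c * β) • -e + β • (u + c • e)‖ = ‖(1 - α + c * β - 1) • -e + β • (u + c • e)‖ := by
  convert hα.symm using 2 <;> module

theorem le_one_of_bisector (hF : IsSegmentFace φ u e c) {α β : ℝ} (hβ : 0 < β)
    (hcβ : c * β ≤ 1) (hα : ‖α • e + β • u‖ = ‖(α - 1) • e + β • u‖) : α ≤ 1 := by
  have := hF.swap.mul_le_of_bisector hβ hcβ (norm_swap_eq_of_norm_eq c hα)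
  linarith

theorem norm_eq_abs_of_norm_eq_of_lt (hX : finrank ℝ X = 2) (hF : IsSegmentFace φ u e c)
    {β a₁ a₂ a₃ : ℝ} (h₁₂ : a₁ < a₂) (h₂₃ : a₂ < a₃)
    (h₁ : ‖a₁ • e + β • u‖ = ‖a₂ • e + β • u‖) (h₃ : ‖a₃ • e + β • u‖ = ‖a₂ • e + β • u‖) :
    ‖a₂ • e + β • u‖ = |β| := by
  have hne : a₁ • e + β • u ≠ a₃ • e + β • u := by
    rw [Ne, add_left_inj, (smul_left_injective ℝ hF.ne_zero).eq_iff]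
    exact (h₁₂.trans h₂₃).ne
  simpa [hF.apply_base, hF.apply_dir] using norm_eq_abs_of_mem_openSegment hX hF.norm_eq_one hne
    (by simp [hF.apply_dir]) (smul_add_mem_openSegment h₁₂ h₂₃ e (β • u)) h₁ h₃

theorem le_of_bisector_of_bisector (hX : finrank ℝ X = 2) (hF : IsSegmentFace φ u e c)
    {α α' β : ℝ} (hβ : 0 < β) (hcβ : c * β ≤ 1)
    (hα : ‖α • e + β • u‖ = ‖(α - 1) • e + β • u‖)
    (hα' : ‖α' • e + β • u‖ = ‖(α' - 1) • e + β • u‖) : α ≤ α' := by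
  by_contra! hlt
  have hα'_ge := hF.mul_le_of_bisector hβ hcβ hα'
  have hα_le := hF.le_one_of_bisector hβ hcβ hα
  have hcβ0 : 0 < c * β := mul_pos hF.pos hβ
  have hconv := convexOn_norm_smul_add e (β • u)
  -- convexity forces equal values at `α' - 1 < α - 1 < α'`
  have hle : ‖(α - 1) • e + β • u‖ ≤ ‖α' • e + β • u‖ := by
    simpa [← hα'] using hconv.le_on_segment (x := α' - 1) (y := α') trivial trivial
      (by rw [segment_eq_Icc (by linarith)]; constructor <;> linarith)
  have hge : ‖α' • e + β • u‖ ≤ ‖(α - 1) • e + β • u‖ := by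
    simpa [hα] using hconv.le_on_segment (x := α - 1) (y := α) trivial trivial
      (by rw [segment_eq_Icc (by linarith)]; constructor <;> linarith)
  have hflat := hF.norm_eq_abs_of_norm_eq_of_lt hX (a₁ := α' - 1) (a₂ := α - 1) (a₃ := α')
    (by linarith) (by linarith) (hα'.symm.trans (le_antisymm hle hge).symm) (le_antisymm hge hle)
  rw [abs_of_pos hβ] at hflat
  have hflat' : ‖(α' - 1) • e + β • u‖ = β := by rw [← hα', le_antisymm hge hle, hflat]
  have := ((hF.norm_smul_add_smul_eq_iff hβ).1 hflat').1
  linarith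

theorem mul_le_of_bisector_of_lt (hX : finrank ℝ X = 2) (hF : IsSegmentFace φ u e c)
    {α α' β k : ℝ} (hβ : 0 < β) (hcβ : c * β ≤ 1) (hk0 : 0 < k) (hk1 : k < 1)
    (hα : ‖α • e + β • u‖ = ‖(α - 1) • e + β • u‖)
    (hα' : ‖α' • e + (k * β) • u‖ = ‖(α' - 1) • e + (k * β) • u‖) : k * α ≤ α' := by
  by_contra! hlt
  set R := ‖α • e + β • u‖ with hR
  rcases (hF.le_norm_smul_add_smul α β).eq_or_lt with hRβ | hRβ
  · have hαc := ((hF.norm_smul_add_smul_eq_iff hβ).1 hRβ.symm).2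
    have hα'c := hF.mul_le_of_bisector (mul_pos hk0 hβ) (by nlinarith) hα'
    nlinarith
  · have hkR : ‖(k * α) • e + (k * β) • u‖ = k * R := by
      rw [← smul_smul, ← smul_smul, ← smul_add, norm_smul_of_nonneg hk0.le]
    -- `p + k • (z - p)` is on the bisector too, and splits `z - q` with equality in the
    -- triangle inequality: the slice at height `β` is then flat on `[α - k⁻¹, α]`
    have hA : ‖(k * α - 1) • e + (k * β) • u‖ = k * R := by
      refine le_antisymm ?_ ?_
      · have := (convexOn_norm_smul_add e ((k * β) • u)).monotone_sub_comp_sub_one hlt.le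
        simp only [hα', sub_self, hkR] at this
        linarith
      · have htri := norm_add_le ((k * α - 1) • e + (k * β) • u) ((1 - k) • (α • e + β • u))
        rw [norm_smul_of_nonneg (by linarith), ← hR,
          show (k * α - 1) • e + (k * β) • u + (1 - k) • (α • e + β • u)
            = (α - 1) • e + β • u by module, ← hα] at htri
        linarith
    have hflat := hF.norm_eq_abs_of_norm_eq_of_lt hX (β := β) (a₁ := α - k⁻¹) (a₂ := α - 1)
      (a₃ := α) (by linarith [one_lt_inv₀ hk0 |>.2 hk1]) (by linarith) ?_ hα
    · rw [← hα, abs_of_pos hβ] at hflat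
      exact hRβ.ne' hflat
    · rw [← hα, show (α - k⁻¹) • e + β • u = k⁻¹ • ((k * α - 1) • e + (k * β) • u) by
        match_scalars <;> field_simp, norm_smul_of_nonneg (inv_nonneg.2 hk0.le), hA,
        inv_mul_cancel_left₀ hk0.ne']

theorem mul_le_of_bisector_of_le (hX : finrank ℝ X = 2) (hF : IsSegmentFace φ u e c)
    {α α' β k : ℝ} (hβ : 0 < β) (hcβ : c * β ≤ 1) (hk0 : 0 < k) (hk1 : k ≤ 1)
    (hα : ‖α • e + β • u‖ = ‖(α - 1) • e + β • u‖)
    (hα' : ‖α' • e + (k * β) • u‖ = ‖(α' - 1) • e + (k * β) • u‖) : k * α ≤ α' := by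
  rcases hk1.lt_or_eq with hk1 | rfl
  · exact hF.mul_le_of_bisector_of_lt hX hβ hcβ hk0 hk1 hα hα'
  · rw [one_mul] at hα' ⊢
    exact hF.le_of_bisector_of_bisector hX hβ hcβ hα hα'

theorem bisector_bounds (hX : finrank ℝ X = 2) (hF : IsSegmentFace φ u e c)
    {α α' β k : ℝ} (hβ : 0 < β) (hcβ : c * β ≤ 1) (hk0 : 0 < k) (hk1 : k ≤ 1)
    (hα : ‖α • e + β • u‖ = ‖(α - 1) • e + β • u‖)
    (hα' : ‖α' • e + (k * β) • u‖ = ‖(α' - 1) • e + (k * β) • u‖) :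
    k * α ≤ α' ∧ α' ≤ 1 - k + k * α := by
  refine ⟨hF.mul_le_of_bisector_of_le hX hβ hcβ hk0 hk1 hα hα', ?_⟩
  have := hF.swap.mul_le_of_bisector_of_le hX hβ hcβ hk0 hk1 (norm_swap_eq_of_norm_eq c hα)
    (norm_swap_eq_of_norm_eq c hα')
  linarith

theorem eq_and_mul_eq_one {p q : X} (hF : IsSegmentFace φ u (q - p) c) {t t' : ℝ}
    (h : p + t • (u + c • (q - p)) = q + t' • u) : t = t' ∧ c * t = 1 := by
  have hφ := congrArg φ h
  simp only [map_add, map_smul, hF.apply_base, hF.apply_dir, smul_eq_mul] at hφ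
  have hφpq : φ q = φ p := by simpa [sub_eq_zero] using hF.apply_dir
  refine ⟨by linarith, ?_⟩
  have h' : (c * t - 1) • (q - p) = 0 := by
    rw [show t' = t by linarith] at h
    linear_combination (norm := module) h
  simpa [sub_eq_zero, hF.ne_zero] using h'

theorem apex_mem_bisec {p q : X} (hF : IsSegmentFace φ u (q - p) c) {t : ℝ} (ht : c * t = 1) :
    q + t • u ∈ bisec p q ∧ φ (q + t • u - p) = t := by
  have ht0 : 0 < t := pos_of_mul_pos_right (ht ▸ one_pos) hF.pos.le
  have hsp : q + t • u - p = (c * t) • (q - p) + t • u := by rw [ht, one_smul]; abel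
  refine ⟨?_, by simp [hsp, hF.apply_base, hF.apply_dir]⟩
  have hq : ‖q + t • u - q‖ = t := by
    simpa using (hF.norm_smul_add_smul_eq_iff ht0 (a := 0)).2 ⟨le_rfl, by positivity⟩
  change ‖q + t • u - p‖ = ‖q + t • u - q‖
  rw [hq, hsp, (hF.norm_smul_add_smul_eq_iff ht0).2 ⟨by positivity, le_rfl⟩]

theorem exists_eq_add_smul_sub_add_smul_sub (hX : finrank ℝ X = 2) {p q z z' : X}
    (hF : IsSegmentFace φ u (q - p) c) (hz : z ∈ bisec p q) (hz' : z' ∈ bisec p q)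
    (h0 : 0 < φ (z' - p)) (hle : φ (z' - p) ≤ φ (z - p)) (hc : c * φ (z - p) ≤ 1) :
    ∃ l m : ℝ, 0 ≤ l ∧ 0 ≤ m ∧ l + m < 1 ∧ z' = z + l • (p - z) + m • (q - z) := by
  obtain ⟨e, rfl⟩ : ∃ e, q = p + e := ⟨q - p, by abel⟩
  rw [add_sub_cancel_left] at hF
  have coord (w : X) (hw : w ∈ bisec p (p + e)) : ∃ a : ℝ, w - p = a • e + φ (w - p) • u ∧
      ‖a • e + φ (w - p) • u‖ = ‖(a - 1) • e + φ (w - p) • u‖ := by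
    obtain ⟨a, ha⟩ := exists_eq_smul_add_apply_smul hX hF.ne_zero hF.apply_dir hF.apply_base (w - p)
    refine ⟨a, ha, ?_⟩
    rw [← ha, show (a - 1) • e + φ (w - p) • u = w - (p + e) by
      linear_combination (norm := module) -ha]
    exact hw
  have hβ : 0 < φ (z - p) := h0.trans_le hle
  obtain ⟨α, hzα, hα⟩ := coord z hz
  obtain ⟨α', hzα', hα'⟩ := coord z' hz'
  set k := φ (z' - p) / φ (z - p)
  have hk : φ (z' - p) = k * φ (z - p) := (div_mul_cancel₀ _ hβ.ne').symm
  rw [hk] at hzα' hα'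
  obtain ⟨h1, h2⟩ := hF.bisector_bounds hX hβ hc (div_pos h0 hβ) ((div_le_one hβ).2 hle) hα hα'
  refine ⟨1 - k + k * α - α', α' - k * α, by linarith, by linarith, by linarith [div_pos h0 hβ], ?_⟩
  linear_combination (norm := module) hzα' - k • hzα

end IsSegmentFace

theorem bisector_curve_part_in_double_cone_general
    (hdim : Module.finrank ℝ X = 2) (p q : X) (hpq : p ≠ q)
    (φ : X →L[ℝ] ℝ) (hφ : ‖φ‖ = 1)
    (u u' : X)
    (hface : {x : X | ‖x‖ ≤ 1 ∧ φ x = 1} = segment ℝ u u')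
    (hlabel : ∃ c : ℝ, 0 < c ∧ u' - u = c • (q - p))
    (s_t : X)
    (hst1 : ∃ t : ℝ, 0 ≤ t ∧ s_t = p + t • u')
    (hst2 : ∃ t : ℝ, 0 ≤ t ∧ s_t = q + t • u) :
    (∀ z ∈ {z ∈ bisec p q | 0 < φ (z - p) ∧ φ (z - p) ≤ φ (s_t - p)},
      {z ∈ bisec p q | 0 < φ (z - p) ∧ φ (z - p) ≤ φ (s_t - p)} ⊆
        {w : X | ∃ l m : ℝ, 0 ≤ l * m ∧ w = z + l • (p - z) + m • (q - z)}) ∧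
    {z ∈ bisec p q | 0 < φ (z - p) ∧ φ (z - p) ≤ φ (s_t - p)} ⊆
      convexHull ℝ {p, q, s_t} := by
  obtain ⟨c, hc, hcu⟩ := hlabel
  obtain rfl : u' = u + c • (q - p) := by rw [← hcu, add_sub_cancel]
  have hF : IsSegmentFace φ u (q - p) c := ⟨hφ, sub_ne_zero.2 hpq.symm, hc, hface⟩
  obtain ⟨t, -, hs⟩ := hst1
  obtain ⟨t', -, rfl⟩ := hst2
  obtain ⟨rfl, ht⟩ := hF.eq_and_mul_eq_one hs.symm
  obtain ⟨hs_mem, hφs⟩ := hF.apex_mem_bisec ht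
  have hc_le {z : X} (hz : φ (z - p) ≤ φ (q + t • u - p)) : c * φ (z - p) ≤ 1 :=
    ht ▸ mul_le_mul_of_nonneg_left (hz.trans hφs.le) hc.le
  refine ⟨fun z hz z' hz' => ?_, fun z hz => ?_⟩
  · rcases le_total (φ (z' - p)) (φ (z - p)) with h | h
    · obtain ⟨l, m, hl, hm, -, rfl⟩ :=
        hF.exists_eq_add_smul_sub_add_smul_sub hdim hz.1 hz'.1 hz'.2.1 h (hc_le hz.2.2)
      exact ⟨l, m, mul_nonneg hl hm, rfl⟩
    · obtain ⟨l, m, hl, hm, hlm, hzz'⟩ :=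
        hF.exists_eq_add_smul_sub_add_smul_sub hdim hz'.1 hz.1 hz.2.1 h (hc_le hz'.2.2)
      exact exists_eq_add_smul_sub_of_eq hl hm hlm hzz'
  · obtain ⟨l, m, hl, hm, hlm, rfl⟩ := hF.exists_eq_add_smul_sub_add_smul_sub hdim hs_mem hz.1
      hz.2.1 (hφs ▸ hz.2.2) (by rw [hφs, ht])
    exact add_smul_sub_add_smul_sub_mem_convexHull hl hm hlm.le

theorem bisector_curve_part_in_double_cone
    (hdim : Module.finrank ℝ X = 2) (p q : X) (hpq : p ≠ q)
    (hns : ¬ strictPair p q)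
    (φ : X →L[ℝ] ℝ) (hφ : ‖φ‖ = 1) (hφpq : φ (p - q) = 0)
    (u u' : X) (huu' : u ≠ u')
    (hface : {x : X | ‖x‖ ≤ 1 ∧ φ x = 1} = segment ℝ u u')
    (hlabel : ∃ c : ℝ, 0 < c ∧ u' - u = c • (q - p))
    (s_t : X)
    (hst1 : ∃ t : ℝ, 0 ≤ t ∧ s_t = p + t • u')
    (hst2 : ∃ t : ℝ, 0 ≤ t ∧ s_t = q + t • u) :
    (∀ z ∈ {z ∈ bisec p q | 0 < φ (z - p) ∧ φ (z - p) ≤ φ (s_t - p)},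
      {z ∈ bisec p q | 0 < φ (z - p) ∧ φ (z - p) ≤ φ (s_t - p)} ⊆
        {w : X | ∃ l m : ℝ, 0 ≤ l * m ∧ w = z + l • (p - z) + m • (q - z)}) ∧
    {z ∈ bisec p q | 0 < φ (z - p) ∧ φ (z - p) ≤ φ (s_t - p)} ⊆
      convexHull ℝ {p, q, s_t} :=
  bisector_curve_part_in_double_cone_general hdim p q hpq φ hφ u u' hface hlabel s_t hst1 hst2
end

section
/- Let (p,q) be a non-strict pair in X. Then C(p,φ) ∩ C(q,φ) = conv({s_t + t(s_t − p) : t ≥ 0} ∪ {s_t + t(s_t − q) : t ≥ 0}); that is, the intersection of the two cones equals the convex hull of the ray from s_t opposite to p and the ray from s_t opposite to q. -/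
/-!
Every `a` with `φ a = ‖a‖` is a nonnegative multiple of a point of the face `[u, u']`, so each
cone `C(x, φ)` is the wedge `x + ℝ≥0 u + ℝ≥0 u'`. Applying `φ` to `s_t = p + t₁ u' = q + t₂ u`
gives `t₁ = t₂ = t`, and since `u, u'` are linearly independent, comparing coordinates shows that
the wedges at `p` and `q` meet exactly in the wedge at `s_t`. That wedge is spanned by the rays
from `s_t` in the directions `s_t - p = t u'` and `s_t - q = t u`, and is the convex hull of them.
-/

variable {X : Type*} [NormedAddCommGroup X] [NormedSpace ℝ X]

lemma LinearIndependent.pair_of_map_eq {K M : Type*} [Field K] [AddCommGroup M] [Module K M]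
    (f : M →ₗ[K] K) {u u' : M} (hf : f u = f u') (hu : f u ≠ 0) (huu' : u ≠ u') :
    LinearIndependent K ![u, u'] := by
  refine LinearIndependent.pair_iff.mpr fun s t hst => ?_
  have hts : t = -s := by
    have := congrArg f hst
    rw [map_add, map_smul, map_smul, hf, smul_eq_mul, smul_eq_mul, ← add_mul, map_zero] at this
    linear_combination (mul_eq_zero.mp this).resolve_right (hf ▸ hu)
  subst hts
  have : s • (u - u') = 0 := by rw [smul_sub, sub_eq_add_neg, ← neg_smul]; exact hst
  have hs : s = 0 := (smul_eq_zero.mp this).resolve_right (sub_ne_zero.mpr huu')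
  exact ⟨hs, by rw [hs, neg_zero]⟩

section Wedge

variable {E : Type*} [AddCommGroup E] [Module ℝ E]

def wedge (x v w : E) : Set E := {z | ∃ α β : ℝ, 0 ≤ α ∧ 0 ≤ β ∧ z = x + α • v + β • w}

lemma wedge_comm (x v w : E) : wedge x v w = wedge x w v := by
  ext z
  constructor <;> rintro ⟨α, β, hα, hβ, rfl⟩ <;> exact ⟨β, α, hβ, hα, add_right_comm _ _ _⟩

lemma wedge_smul_smul {t : ℝ} (ht : 0 < t) (x v w : E) : wedge x (t • v) (t • w) = wedge x v w := by
  ext z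
  constructor
  · rintro ⟨α, β, hα, hβ, rfl⟩
    exact ⟨α * t, β * t, by positivity, by positivity, by simp only [mul_smul]⟩
  · rintro ⟨α, β, hα, hβ, rfl⟩
    refine ⟨α / t, β / t, by positivity, by positivity, ?_⟩
    simp only [smul_smul, div_mul_cancel₀ _ ht.ne']

lemma convex_wedge (x v w : E) : Convex ℝ (wedge x v w) := by
  rintro _ ⟨α, β, hα, hβ, rfl⟩ _ ⟨γ, δ, hγ, hδ, rfl⟩ a b ha hb hab
  refine ⟨a * α + b * γ, a * β + b * δ, by positivity, by positivity, ?_⟩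
  obtain rfl : b = 1 - a := by linarith
  module

lemma convexHull_union_rays_eq_wedge (x v w : E) :
    convexHull ℝ ({z | ∃ r : ℝ, 0 ≤ r ∧ z = x + r • v} ∪ {z | ∃ r : ℝ, 0 ≤ r ∧ z = x + r • w}) =
      wedge x v w := by
  refine (convexHull_min ?_ (convex_wedge x v w)).antisymm ?_
  · rintro _ (⟨r, hr, rfl⟩ | ⟨r, hr, rfl⟩)
    · exact ⟨r, 0, hr, le_rfl, by simp⟩
    · exact ⟨0, r, le_rfl, hr, by simp⟩
  · rintro _ ⟨α, β, hα, hβ, rfl⟩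
    have hmid : x + α • v + β • w =
        (1 / 2 : ℝ) • (x + (2 * α) • v) + (1 / 2 : ℝ) • (x + (2 * β) • w) := by
      module
    rw [hmid]
    exact convex_convexHull ℝ _ (subset_convexHull ℝ _ (.inl ⟨2 * α, by positivity, rfl⟩))
      (subset_convexHull ℝ _ (.inr ⟨2 * β, by positivity, rfl⟩)) (by norm_num) (by norm_num)
      (by norm_num)

lemma wedge_inter_wedge {p q s u u' : E} {t : ℝ} (hli : LinearIndependent ℝ ![u, u'])
    (hp : s - p = t • u') (hq : s - q = t • u) (ht : 0 ≤ t) :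
    wedge p u u' ∩ wedge q u u' = wedge s u u' := by
  obtain rfl : p = s - t • u' := by rw [← hp, sub_sub_cancel]
  obtain rfl : q = s - t • u := by rw [← hq, sub_sub_cancel]
  ext z
  constructor
  · rintro ⟨⟨α, β, hα, -, rfl⟩, ⟨γ, δ, -, hδ, h⟩⟩
    obtain ⟨-, hβ⟩ := hli.eq_of_pair (s := α) (t := β - t) (s' := γ - t) (t' := δ)
      (by linear_combination (norm := module) h)
    exact ⟨α, δ, hα, hδ, by rw [← hβ]; module⟩
  · rintro ⟨α, δ, hα, hδ, rfl⟩
    exact ⟨⟨α, δ + t, hα, by positivity, by module⟩, ⟨α + t, δ, by positivity, hδ, by module⟩⟩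

end Wedge

section Cone

variable {φ : X →L[ℝ] ℝ}

lemma map_le_norm_of_opNorm_le_one (hφ : ‖φ‖ ≤ 1) (a : X) : φ a ≤ ‖a‖ :=
  (le_abs_self _).trans (by simpa using φ.le_of_opNorm_le hφ a)

lemma map_add_eq_norm (hφ : ‖φ‖ ≤ 1) {a b : X} (ha : φ a = ‖a‖) (hb : φ b = ‖b‖) :
    φ (a + b) = ‖a + b‖ :=
  (map_le_norm_of_opNorm_le_one hφ _).antisymm <|
    (norm_add_le a b).trans_eq (by rw [map_add, ha, hb])

lemma map_smul_eq_norm {c : ℝ} (hc : 0 ≤ c) {a : X} (ha : φ a = ‖a‖) : φ (c • a) = ‖c • a‖ := by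
  rw [map_smul, ha, norm_smul, Real.norm_of_nonneg hc, smul_eq_mul]

variable {u u' : X} (hface : {x : X | ‖x‖ ≤ 1 ∧ φ x = 1} = segment ℝ u u')
include hface

lemma map_eq_norm_of_mem_face (hφ : ‖φ‖ ≤ 1) {x : X} (hx : x ∈ segment ℝ u u') : φ x = ‖x‖ := by
  rw [← hface] at hx
  exact le_antisymm (map_le_norm_of_opNorm_le_one hφ x) (hx.2 ▸ hx.1)

lemma map_eq_norm_iff (hφ : ‖φ‖ ≤ 1) (a : X) :
    φ a = ‖a‖ ↔ ∃ α β : ℝ, 0 ≤ α ∧ 0 ≤ β ∧ a = α • u + β • u' := by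
  refine ⟨fun ha => ?_, ?_⟩
  · rcases eq_or_ne a 0 with rfl | ha0
    · exact ⟨0, 0, le_rfl, le_rfl, by simp⟩
    have hna : 0 < ‖a‖ := norm_pos_iff.mpr ha0
    have hmem : ‖a‖⁻¹ • a ∈ segment ℝ u u' := by
      rw [← hface]
      refine ⟨by rw [norm_smul, norm_inv, norm_norm, inv_mul_cancel₀ hna.ne'], ?_⟩
      rw [map_smul, ha, smul_eq_mul, inv_mul_cancel₀ hna.ne']
    obtain ⟨c, d, hc, hd, -, hcd⟩ := hmem
    refine ⟨‖a‖ * c, ‖a‖ * d, by positivity, by positivity, ?_⟩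
    rw [mul_smul, mul_smul, ← smul_add, hcd, smul_inv_smul₀ hna.ne']
  · rintro ⟨α, β, hα, hβ, rfl⟩
    exact map_add_eq_norm hφ
      (map_smul_eq_norm hα (map_eq_norm_of_mem_face hface hφ (left_mem_segment ℝ u u')))
      (map_smul_eq_norm hβ (map_eq_norm_of_mem_face hface hφ (right_mem_segment ℝ u u')))

lemma cone_eq_wedge (hφ : ‖φ‖ ≤ 1) (x : X) : cone x φ = wedge x u u' := by
  ext z
  simp only [cone, wedge, Set.mem_ofPred_eq, map_eq_norm_iff hface hφ, sub_eq_iff_eq_add',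
    add_assoc]

lemma map_eq_one_of_face_left : φ u = 1 :=
  ((Set.ext_iff.mp hface u).mpr (left_mem_segment ℝ u u')).2

lemma map_eq_one_of_face_right : φ u' = 1 :=
  ((Set.ext_iff.mp hface u').mpr (right_mem_segment ℝ u u')).2

end Cone

theorem cone_inter_cone_eq_convexHull_rays_general
    (p q : X) (hpq : p ≠ q)
    (φ : X →L[ℝ] ℝ) (hφ : ‖φ‖ = 1) (hφpq : φ (p - q) = 0)
    (u u' : X) (huu' : u ≠ u')
    (hface : {x : X | ‖x‖ ≤ 1 ∧ φ x = 1} = segment ℝ u u')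
    (s_t : X)
    (hst1 : ∃ t : ℝ, 0 ≤ t ∧ s_t = p + t • u')
    (hst2 : ∃ t : ℝ, 0 ≤ t ∧ s_t = q + t • u) :
    cone p φ ∩ cone q φ =
      convexHull ℝ ({z : X | ∃ t : ℝ, 0 ≤ t ∧ z = s_t + t • (s_t - p)} ∪
        {z : X | ∃ t : ℝ, 0 ≤ t ∧ z = s_t + t • (s_t - q)}) := by
  obtain ⟨t, ht0, hsp⟩ := hst1
  obtain ⟨t₂, -, hsq⟩ := hst2
  have hφu := map_eq_one_of_face_left hface
  have hφu' := map_eq_one_of_face_right hface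
  have htt₂ : t = t₂ := by
    have := congrArg φ (hsp.symm.trans hsq)
    simp only [map_add, map_smul, hφu, hφu', smul_eq_mul, mul_one] at this
    linarith [map_sub φ p q]
  subst htt₂
  rw [← sub_eq_iff_eq_add'] at hsp hsq
  have ht : 0 < t := ht0.lt_of_ne fun h => hpq <| by
    rw [← h, zero_smul, sub_eq_zero] at hsp hsq
    exact hsp.symm.trans hsq
  rw [cone_eq_wedge hface hφ.le, cone_eq_wedge hface hφ.le,
    wedge_inter_wedge (.pair_of_map_eq φ.toLinearMap (hφu.trans hφu'.symm) (by simp [hφu]) huu')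
      hsp hsq ht0,
    convexHull_union_rays_eq_wedge, hsp, hsq, wedge_smul_smul ht, wedge_comm]

theorem cone_inter_cone_eq_convexHull_rays
    (hdim : Module.finrank ℝ X = 2) (p q : X) (hpq : p ≠ q)
    (hns : ¬ strictPair p q)
    (φ : X →L[ℝ] ℝ) (hφ : ‖φ‖ = 1) (hφpq : φ (p - q) = 0)
    (u u' : X) (huu' : u ≠ u')
    (hface : {x : X | ‖x‖ ≤ 1 ∧ φ x = 1} = segment ℝ u u')
    (hlabel : ∃ c : ℝ, 0 < c ∧ u' - u = c • (q - p))
    (s_t : X)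
    (hst1 : ∃ t : ℝ, 0 ≤ t ∧ s_t = p + t • u')
    (hst2 : ∃ t : ℝ, 0 ≤ t ∧ s_t = q + t • u) :
    cone p φ ∩ cone q φ =
      convexHull ℝ ({z : X | ∃ t : ℝ, 0 ≤ t ∧ z = s_t + t • (s_t - p)} ∪
        {z : X | ∃ t : ℝ, 0 ≤ t ∧ z = s_t + t • (s_t - q)}) :=
  cone_inter_cone_eq_convexHull_rays_general p q hpq φ hφ hφpq u u' huu' hface s_t hst1 hst2
end

section
/- Let X be a two-dimensional real normed vector space with unit sphere S, let a, b ∈ S with a ≠ b such that the segment [a,b] is contained in S, and let x be a point in the relative interior of [a,b] (i.e., x = λa + (1−λ)b for some 0 < λ < 1). Then x has a unique norming functional: there is exactly one continuous linear functional φ : X → ℝ with operator norm 1 and φ(x) = ‖x‖. -/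
variable {X : Type*} [NormedAddCommGroup X] [NormedSpace ℝ X]

/-!
A norming functional `φ` of `x` satisfies `φ ≤ 1` on the unit ball and `φ x = 1`; since `x` is a
proper convex combination of `a` and `b`, this forces `φ a = φ b = 1`. The points `a` and `b` are
linearly independent (`b = -a` would put `0` on the segment), hence a basis of the plane, so these
two values determine `φ`. Existence is Hahn–Banach.
-/

theorem LinearMap.eq_of_mem_openSegment_of_le {E : Type*} [AddCommGroup E] [Module ℝ E]
    (φ : E →ₗ[ℝ] ℝ) {a b x : E} {c : ℝ} (hx : x ∈ openSegment ℝ a b)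
    (ha : φ a ≤ c) (hb : φ b ≤ c) (hxc : φ x = c) : φ a = c ∧ φ b = c := by
  obtain ⟨s, t, hs, ht, hst, rfl⟩ := hx
  rw [map_add, map_smul, map_smul, smul_eq_mul, smul_eq_mul] at hxc
  have hc : c = s * c + t * c := by rw [← add_mul, hst, one_mul]
  constructor <;> nlinarith

theorem ContinuousLinearMap.apply_le_one {φ : X →L[ℝ] ℝ} (hφ : ‖φ‖ ≤ 1) {y : X} (hy : ‖y‖ ≤ 1) :
    φ y ≤ 1 :=
  calc φ y ≤ ‖φ y‖ := Real.le_norm_self _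
    _ ≤ ‖φ‖ * ‖y‖ := φ.le_opNorm y
    _ ≤ 1 := mul_le_one₀ hφ (norm_nonneg y) hy

theorem ContinuousLinearMap.apply_eq_one_of_mem_openSegment {φ : X →L[ℝ] ℝ} (hφ : ‖φ‖ ≤ 1)
    {a b x : X} (ha : ‖a‖ ≤ 1) (hb : ‖b‖ ≤ 1) (hx : x ∈ openSegment ℝ a b) (hφx : φ x = 1) :
    φ a = 1 ∧ φ b = 1 :=
  (φ : X →ₗ[ℝ] ℝ).eq_of_mem_openSegment_of_le hx (φ.apply_le_one hφ ha) (φ.apply_le_one hφ hb) hφx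

theorem linearIndependent_pair_of_segment_subset_sphere {a b : X} (hab : a ≠ b)
    (hseg : segment ℝ a b ⊆ {x : X | ‖x‖ = 1}) : LinearIndependent ℝ ![a, b] := by
  have ha : ‖a‖ = 1 := hseg (left_mem_segment ℝ a b)
  have ha0 : a ≠ 0 := by
    rintro rfl
    simp at ha
  rw [LinearIndependent.pair_iff' ha0]
  rintro c rfl
  have hc : |c| = 1 := by
    simpa [norm_smul, ha] using hseg (right_mem_segment ℝ a (c • a))
  rcases (abs_eq zero_le_one).mp hc with rfl | rfl
  · exact hab (one_smul ℝ a).symm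
  · have h0 := hseg (midpoint_mem_segment a ((-1 : ℝ) • a))
    rw [neg_one_smul, midpoint_self_neg] at h0
    simp at h0

theorem LinearMap.ext_of_linearIndependent_pair {K V W : Type*} [DivisionRing K] [AddCommGroup V]
    [Module K V] [AddCommGroup W] [Module K W] (hdim : Module.finrank K V = 2) {a b : V}
    (hab : LinearIndependent K ![a, b]) {f g : V →ₗ[K] W} (ha : f a = g a) (hb : f b = g b) :
    f = g :=
  LinearMap.ext_on_range (hab.span_eq_top_of_card_eq_finrank (by simp [hdim]))
    (Fin.forall_fin_two.2 ⟨ha, hb⟩)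

theorem unique_norming_functional_of_relint_segment_general
    (hdim : Module.finrank ℝ X = 2)
    (a b : X) (hab : a ≠ b)
    (hseg : segment ℝ a b ⊆ {x : X | ‖x‖ = 1})
    (x : X) (l : ℝ) (hl0 : 0 < l) (hl1 : l < 1) (hx : x = l • a + (1 - l) • b) :
    ∃! φ : X →L[ℝ] ℝ, ‖φ‖ = 1 ∧ φ x = ‖x‖ := by
  have hx' : x ∈ openSegment ℝ a b := ⟨l, 1 - l, hl0, by linarith, by ring, hx.symm⟩
  have hxn : ‖x‖ = 1 := hseg (openSegment_subset_segment ℝ a b hx')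
  have ha : ‖a‖ ≤ 1 := (hseg (left_mem_segment ℝ a b)).le
  have hb : ‖b‖ ≤ 1 := (hseg (right_mem_segment ℝ a b)).le
  refine existsUnique_of_exists_of_unique ?_ ?_
  · exact exists_dual_vector ℝ x (by simp [hxn])
  · rintro φ ψ ⟨hφ, hφx⟩ ⟨hψ, hψx⟩
    rw [hxn] at hφx hψx
    obtain ⟨hφa, hφb⟩ := φ.apply_eq_one_of_mem_openSegment hφ.le ha hb hx' hφx
    obtain ⟨hψa, hψb⟩ := ψ.apply_eq_one_of_mem_openSegment hψ.le ha hb hx' hψx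
    exact ContinuousLinearMap.coe_injective <|
      LinearMap.ext_of_linearIndependent_pair hdim
        (linearIndependent_pair_of_segment_subset_sphere hab hseg)
        (hφa.trans hψa.symm) (hφb.trans hψb.symm)

theorem unique_norming_functional_of_relint_segment
    (hdim : Module.finrank ℝ X = 2)
    (a b : X) (ha : ‖a‖ = 1) (hb : ‖b‖ = 1) (hab : a ≠ b)
    (hseg : segment ℝ a b ⊆ {x : X | ‖x‖ = 1})
    (x : X) (l : ℝ) (hl0 : 0 < l) (hl1 : l < 1) (hx : x = l • a + (1 - l) • b) :
    ∃! φ : X →L[ℝ] ℝ, ‖φ‖ = 1 ∧ φ x = ‖x‖ :=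
  unique_norming_functional_of_relint_segment_general hdim a b hab hseg x l hl0 hl1 hx
end
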